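/- arXiv:1710.10823 — 6 statements merged into one kernel-verified Lean document; each statement's English description precedes it below -/
import Mathlib

section
/- Let H₀ be a skew-symmetric operator, let (𝒢₁, 𝒢₂, F) be a boundary system for H₀ with the standard symmetric and standard unitary forms, and let L₀ : 𝒢₁ → 𝒢₂ be a unitary operator. Define Γ₁, Γ₂ : D(H₀*) → 𝒢₁ by Γ₁x = (1/√2)(F₁x + L₀⁻¹F₂x) and Γ₂x = (1/√2)(F₁x − L₀⁻¹F₂x). Then (𝒢₁, Γ₁, Γ₂) is a boundary triplet for H₀; that is, x ↦ (Γ₁x, Γ₂x) maps D(H₀*) onto 𝒢₁ ⊕ 𝒢₁ and (H₀*x, y)_ℋ + (x, H₀*y)_ℋ = (Γ₁x, Γ₂y)_{𝒢₁} + (Γ₂x, Γ₁y)_{𝒢₁} for all x, y ∈ D(H₀*). -/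
open scoped InnerProductSpace

/-- Given a boundary system `(𝒢₁, 𝒢₂, F)` for a skew-symmetric operator `H₀`
(with the standard symmetric and unitary forms) and a unitary `L₀ : 𝒢₁ → 𝒢₂`, the maps
`Γ₁x = (1/√2)(F₁x + L₀⁻¹F₂x)` and `Γ₂x = (1/√2)(F₁x − L₀⁻¹F₂x)` form a boundary triplet
`(𝒢₁, Γ₁, Γ₂)` for `H₀`. -/
theorem stmt_2 {ℋ 𝒢₁ 𝒢₂ : Type*}
    [NormedAddCommGroup ℋ] [InnerProductSpace ℂ ℋ] [CompleteSpace ℋ]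
    [NormedAddCommGroup 𝒢₁] [InnerProductSpace ℂ 𝒢₁] [CompleteSpace 𝒢₁]
    [NormedAddCommGroup 𝒢₂] [InnerProductSpace ℂ 𝒢₂] [CompleteSpace 𝒢₂]
    (H₀ : ℋ →ₗ.[ℂ] ℋ)
    (hdense : Dense (H₀.domain : Set ℋ)) (hclosed : H₀.IsClosed)
    (hskew : H₀ ≤ -H₀.adjoint)
    -- `(𝒢₁, 𝒢₂, F)` is a boundary system for `H₀`:
    (F : H₀.adjoint.domain → 𝒢₁ × 𝒢₂)
    (hFsurj : Function.Surjective F)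
    (hFsys : ∀ x y : H₀.adjoint.domain,
      ⟪(x : ℋ), H₀.adjoint y⟫_ℂ + ⟪H₀.adjoint x, (y : ℋ)⟫_ℂ
        = ⟪(F x).1, (F y).1⟫_ℂ - ⟪(F x).2, (F y).2⟫_ℂ)
    -- a unitary operator `L₀ : 𝒢₁ → 𝒢₂`:
    (L₀ : 𝒢₁ ≃ₗᵢ[ℂ] 𝒢₂)
    (Γ₁ Γ₂ : H₀.adjoint.domain → 𝒢₁)
    (hΓ₁ : ∀ x : H₀.adjoint.domain,
      Γ₁ x = ((Real.sqrt 2 : ℂ))⁻¹ • ((F x).1 + L₀.symm ((F x).2)))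
    (hΓ₂ : ∀ x : H₀.adjoint.domain,
      Γ₂ x = ((Real.sqrt 2 : ℂ))⁻¹ • ((F x).1 - L₀.symm ((F x).2))) :
    Function.Surjective (fun x : H₀.adjoint.domain => (Γ₁ x, Γ₂ x)) ∧
      ∀ x y : H₀.adjoint.domain,
        ⟪H₀.adjoint x, (y : ℋ)⟫_ℂ + ⟪(x : ℋ), H₀.adjoint y⟫_ℂ
          = ⟪Γ₁ x, Γ₂ y⟫_ℂ + ⟪Γ₂ x, Γ₁ y⟫_ℂ := by

  set c : ℂ := ((Real.sqrt 2 : ℂ))⁻¹ with hc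
  have hcc : c * c = 2⁻¹ := by
    rw [hc, ← mul_inv]
    norm_cast
    rw [Real.mul_self_sqrt (by norm_num)]; norm_num
  constructor
  · rintro ⟨a, b⟩
    obtain ⟨x, hx⟩ := hFsurj (c • (a + b), L₀ (c • (a - b)))
    refine ⟨x, ?_⟩
    have h1 : (F x).1 = c • (a + b) := by rw [hx]
    have h2 : L₀.symm ((F x).2) = c • (a - b) := by rw [hx]; exact L₀.symm_apply_apply _
    simp only [hΓ₁, hΓ₂, h1, h2, ← hc, Prod.mk.injEq]
    constructor
    · rw [← smul_add, smul_smul, hcc]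
      have : (a + b) + (a - b) = (2:ℂ) • a := by module
      rw [this, smul_smul]; norm_num
    · rw [← smul_sub, smul_smul, hcc]
      have : (a + b) - (a - b) = (2:ℂ) • b := by module
      rw [this, smul_smul]; norm_num
  · intro x y
    have hF := hFsys x y
    have hL : ⟪L₀.symm ((F x).2), L₀.symm ((F y).2)⟫_ℂ = ⟪(F x).2, (F y).2⟫_ℂ :=
      L₀.symm.inner_map_map _ _
    have hconj : (starRingEnd ℂ) c = c := by
      rw [hc, map_inv₀, Complex.conj_ofReal]
    rw [hΓ₁, hΓ₂, hΓ₁, hΓ₂]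
    simp only [← hc, inner_smul_left, inner_smul_right, inner_add_left, inner_add_right,
      inner_sub_left, inner_sub_right, hconj, hL]
    rw [add_comm]
    rw [hF]
    ring_nf
    linear_combination (⟪(F x).1, (F y).1⟫_ℂ - ⟪(F x).2, (F y).2⟫_ℂ) * (1 - 2 * hcc)
end

section
/- Let H₀ be a skew-symmetric operator, set 𝒢₁ := ker(1 − H₀*) and 𝒢₂ := ker(1 + H₀*), and assume the direct sum decomposition D(H₀*) = D(H₀) ∔ 𝒢₁ ∔ 𝒢₂, with P₁ : D(H₀*) → 𝒢₁ and P₂ : D(H₀*) → 𝒢₂ the corresponding linear projections. Equip 𝒢₁ and 𝒢₂ with the inner product of ℋ. Then the map F : Graph(H₀*) → 𝒢₁ ⊕ 𝒢₂ defined by F(x, H₀*x) = (√2 P₁x, √2 P₂x) is surjective and satisfies (x, H₀*y)_ℋ + (H₀*x, y)_ℋ = (√2 P₁x, √2 P₁y)_ℋ − (√2 P₂x, √2 P₂y)_ℋ for all x, y ∈ D(H₀*); that is, (𝒢₁, 𝒢₂, F) is a boundary system for H₀ with the standard symmetric and standard unitary forms. -/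
open scoped InnerProductSpace

/-- For skew-symmetric `H₀`, with `𝒢₁ := ker(1 − H₀*)`, `𝒢₂ := ker(1 + H₀*)`
and the direct decomposition `D(H₀*) = D(H₀) ∔ 𝒢₁ ∔ 𝒢₂` with projections `P₁, P₂`, the map
`F(x, H₀*x) = (√2 P₁x, √2 P₂x)` is a boundary system for `H₀` (standard symmetric and unitary
forms): it maps onto `𝒢₁ ⊕ 𝒢₂` and satisfies the Green-type identity. -/
theorem stmt_6 {ℋ : Type*}
    [NormedAddCommGroup ℋ] [InnerProductSpace ℂ ℋ] [CompleteSpace ℋ]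
    (H₀ : ℋ →ₗ.[ℂ] ℋ)
    (hdense : Dense (H₀.domain : Set ℋ)) (hclosed : H₀.IsClosed)
    (hskew : H₀ ≤ -H₀.adjoint)
    -- the projections `P₁, P₂` of the decomposition `D(H₀*) = D(H₀) ∔ 𝒢₁ ∔ 𝒢₂`:
    (P₁ P₂ : H₀.adjoint.domain →ₗ[ℂ] H₀.adjoint.domain)
    (hP₁ : ∀ x : H₀.adjoint.domain, H₀.adjoint (P₁ x) = (P₁ x : ℋ))
    (hP₂ : ∀ x : H₀.adjoint.domain, H₀.adjoint (P₂ x) = -(P₂ x : ℋ))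
    (hP₀ : ∀ x : H₀.adjoint.domain, ((x - P₁ x - P₂ x : H₀.adjoint.domain) : ℋ) ∈ H₀.domain)
    (huniq : ∀ x a b : H₀.adjoint.domain, H₀.adjoint a = (a : ℋ) → H₀.adjoint b = -(b : ℋ) →
      ((x - a - b : H₀.adjoint.domain) : ℋ) ∈ H₀.domain → a = P₁ x ∧ b = P₂ x) :
    -- `F = (√2 P₁, √2 P₂)` is surjective onto `𝒢₁ ⊕ 𝒢₂` …
    (∀ a b : H₀.adjoint.domain, H₀.adjoint a = (a : ℋ) → H₀.adjoint b = -(b : ℋ) →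
      ∃ x : H₀.adjoint.domain,
        ((Real.sqrt 2 : ℂ)) • P₁ x = a ∧ ((Real.sqrt 2 : ℂ)) • P₂ x = b) ∧
    -- … and satisfies the boundary-system identity:
    (∀ x y : H₀.adjoint.domain,
      ⟪(x : ℋ), H₀.adjoint y⟫_ℂ + ⟪H₀.adjoint x, (y : ℋ)⟫_ℂ
        = ⟪((Real.sqrt 2 : ℂ)) • (P₁ x : ℋ), ((Real.sqrt 2 : ℂ)) • (P₁ y : ℋ)⟫_ℂ
          - ⟪((Real.sqrt 2 : ℂ)) • (P₂ x : ℋ), ((Real.sqrt 2 : ℂ)) • (P₂ y : ℋ)⟫_ℂ) := by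
  have hs2 : (Real.sqrt 2 : ℂ) ≠ 0 := by
    simp [Complex.ofReal_ne_zero, Real.sqrt_eq_zero']
  have hs2sq : (Real.sqrt 2 : ℂ) * (Real.sqrt 2 : ℂ) = 2 := by
    norm_cast
    rw [Real.mul_self_sqrt (by norm_num)]
  constructor
  · intro a b ha hb
    refine ⟨(Real.sqrt 2 : ℂ)⁻¹ • (a + b), ?_, ?_⟩
    · have h := (huniq ((Real.sqrt 2 : ℂ)⁻¹ • (a + b))
        ((Real.sqrt 2 : ℂ)⁻¹ • a) ((Real.sqrt 2 : ℂ)⁻¹ • b)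
        (by rw [H₀.adjoint.map_smul]; rw [ha]; rfl)
        (by rw [H₀.adjoint.map_smul]; rw [hb]; simp)
        (by
          have : ((Real.sqrt 2 : ℂ)⁻¹ • (a + b) - (Real.sqrt 2 : ℂ)⁻¹ • a
              - (Real.sqrt 2 : ℂ)⁻¹ • b : H₀.adjoint.domain) = 0 := by
            rw [smul_add]; abel
          rw [this]
          exact H₀.domain.zero_mem)).1
      rw [← h, smul_smul, mul_inv_cancel₀ hs2, one_smul]
    · have h := (huniq ((Real.sqrt 2 : ℂ)⁻¹ • (a + b))
        ((Real.sqrt 2 : ℂ)⁻¹ • a) ((Real.sqrt 2 : ℂ)⁻¹ • b)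
        (by rw [H₀.adjoint.map_smul]; rw [ha]; rfl)
        (by rw [H₀.adjoint.map_smul]; rw [hb]; simp)
        (by
          have : ((Real.sqrt 2 : ℂ)⁻¹ • (a + b) - (Real.sqrt 2 : ℂ)⁻¹ • a
              - (Real.sqrt 2 : ℂ)⁻¹ • b : H₀.adjoint.domain) = 0 := by
            rw [smul_add]; abel
          rw [this]
          exact H₀.domain.zero_mem)).2
      rw [← h, smul_smul, mul_inv_cancel₀ hs2, one_smul]
  · intro x y
    have hformal := H₀.adjoint_isFormalAdjoint hdense
    -- for `u` whose coercion lies in `H₀.domain`, the form vanishes against anything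
    have hker : ∀ u : H₀.adjoint.domain, (u : ℋ) ∈ H₀.domain →
        ∀ v : H₀.adjoint.domain,
          (⟪(u : ℋ), H₀.adjoint v⟫_ℂ + ⟪H₀.adjoint u, (v : ℋ)⟫_ℂ = 0 ∧
           ⟪(v : ℋ), H₀.adjoint u⟫_ℂ + ⟪H₀.adjoint v, (u : ℋ)⟫_ℂ = 0) := by
      intro u hu v
      have hH₀u : H₀ ⟨(u : ℋ), hu⟩ = -(H₀.adjoint u) := by
        have := hskew.2 (x := ⟨(u : ℋ), hu⟩) (y := u) rfl
        rwa [LinearPMap.neg_apply] at this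
      have h1 : ⟪H₀.adjoint v, (u : ℋ)⟫_ℂ = ⟪(v : ℋ), -(H₀.adjoint u)⟫_ℂ := by
        rw [← hH₀u]
        exact hformal v ⟨(u : ℋ), hu⟩
      have h1' := congrArg (starRingEnd ℂ) h1
      rw [inner_conj_symm, inner_conj_symm] at h1'
      constructor
      · rw [h1', inner_neg_left]
        ring
      · rw [h1, inner_neg_right]
        ring
    -- decompose x and y
    set a := P₁ x
    set b := P₂ x
    set a' := P₁ y
    set b' := P₂ y
    have hx : x = (x - a - b) + (a + b) := by abel
    have hy : y = (y - a' - b') + (a' + b') := by abel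
    have hB : ∀ u v : H₀.adjoint.domain,
        ⟪(u : ℋ), H₀.adjoint v⟫_ℂ + ⟪H₀.adjoint u, (v : ℋ)⟫_ℂ
        = ⟪((P₁ u : H₀.adjoint.domain) : ℋ), ((P₁ v : H₀.adjoint.domain) : ℋ)⟫_ℂ * 2
          - ⟪((P₂ u : H₀.adjoint.domain) : ℋ), ((P₂ v : H₀.adjoint.domain) : ℋ)⟫_ℂ * 2 := by
      intro u v
      have h1 := (hker (u - P₁ u - P₂ u) (hP₀ u) v).1
      have h2 := (hker (v - P₁ v - P₂ v) (hP₀ v) (P₁ u + P₂ u)).2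
      have hu : u = (u - P₁ u - P₂ u) + (P₁ u + P₂ u) := by abel
      have hv : v = (v - P₁ v - P₂ v) + (P₁ v + P₂ v) := by abel
      calc ⟪(u : ℋ), H₀.adjoint v⟫_ℂ + ⟪H₀.adjoint u, (v : ℋ)⟫_ℂ
          = (⟪((u - P₁ u - P₂ u : H₀.adjoint.domain) : ℋ), H₀.adjoint v⟫_ℂ
              + ⟪H₀.adjoint (u - P₁ u - P₂ u), (v : ℋ)⟫_ℂ)
            + (⟪((P₁ u + P₂ u : H₀.adjoint.domain) : ℋ), H₀.adjoint v⟫_ℂ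
              + ⟪H₀.adjoint (P₁ u + P₂ u), (v : ℋ)⟫_ℂ) := by
            conv_lhs => rw [hu]
            simp only [H₀.adjoint.map_add, Submodule.coe_add, inner_add_left, inner_add_right]
            ring
        _ = ⟪((P₁ u + P₂ u : H₀.adjoint.domain) : ℋ), H₀.adjoint v⟫_ℂ
              + ⟪H₀.adjoint (P₁ u + P₂ u), (v : ℋ)⟫_ℂ := by rw [h1]; ring
        _ = (⟪((P₁ u + P₂ u : H₀.adjoint.domain) : ℋ),
                H₀.adjoint (v - P₁ v - P₂ v)⟫_ℂ
              + ⟪H₀.adjoint (P₁ u + P₂ u), ((v - P₁ v - P₂ v : H₀.adjoint.domain) : ℋ)⟫_ℂ)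
            + (⟪((P₁ u + P₂ u : H₀.adjoint.domain) : ℋ),
                H₀.adjoint (P₁ v + P₂ v)⟫_ℂ
              + ⟪H₀.adjoint (P₁ u + P₂ u), ((P₁ v + P₂ v : H₀.adjoint.domain) : ℋ)⟫_ℂ) := by
            conv_lhs => rw [hv]
            simp only [H₀.adjoint.map_add, Submodule.coe_add, inner_add_left, inner_add_right]
            ring
        _ = ⟪((P₁ u + P₂ u : H₀.adjoint.domain) : ℋ), H₀.adjoint (P₁ v + P₂ v)⟫_ℂ
              + ⟪H₀.adjoint (P₁ u + P₂ u), ((P₁ v + P₂ v : H₀.adjoint.domain) : ℋ)⟫_ℂ := by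
            rw [h2]; ring
        _ = _ := by
            rw [H₀.adjoint.map_add, H₀.adjoint.map_add, hP₁, hP₂, hP₁, hP₂,
              Submodule.coe_add, Submodule.coe_add]
            simp only [inner_add_left, inner_add_right, inner_neg_left, inner_neg_right]
            ring
    rw [hB x y, inner_smul_left, inner_smul_right, inner_smul_left, inner_smul_right,
      Complex.conj_ofReal]
    rw [← mul_assoc, ← mul_assoc, hs2sq]
    ring
end

section
/- Let H₀ be a skew-symmetric operator. Then there exists a skew-self-adjoint extension H ⊇ H₀ if and only if dim ker(1 − H₀*) = dim ker(1 + H₀*), where the dimensions are taken as Hilbert space dimensions (cardinals). -/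
/-!
For a skew-symmetric `B`, `‖x ± B x‖² = ‖x‖² + ‖B x‖²`, so the Cayley transform
`x - B x ↦ x + B x` is an isometry from `ran (1 - B)` onto `ran (1 + B)`; both ranges are closed
when `B` is, and their orthogonal complements are the deficiency spaces `ker (1 ∓ B*)`.
A skew-self-adjoint `H` has `ran (1 ± H) = ℋ`, so its Cayley transform is a unitary of `ℋ`;
conversely a unitary `U` without eigenvalue `-1` is the Cayley transform of the skew-self-adjoint
operator with graph `{(y + U y, U y - y)}`. Hence skew-self-adjoint extensions of `H₀` correspond
to unitaries extending its Cayley transform, and such a unitary exists exactly when the two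
deficiency spaces are isometric.
-/

open scoped InnerProductSpace

theorem LinearIsometryEquiv.exists_extension {𝕜 E : Type*} [RCLike 𝕜] [NormedAddCommGroup E]
    [InnerProductSpace 𝕜 E] {K L : Submodule 𝕜 E} [K.HasOrthogonalProjection]
    [L.HasOrthogonalProjection] (e : K ≃ₗᵢ[𝕜] L) (f : Kᗮ ≃ₗᵢ[𝕜] Lᗮ) :
    ∃ U : E ≃ₗᵢ[𝕜] E, ∀ k : K, U k = e k := by
  let T : E →ₗ[𝕜] E := LinearMap.ofIsCompl K.isCompl_orthogonal
    (L.subtype ∘ₗ e.toLinearEquiv.toLinearMap) (Lᗮ.subtype ∘ₗ f.toLinearEquiv.toLinearMap)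
  have hT (a : K) (b : Kᗮ) : T (a + b) = e a + f b := by
    simp [T]
  have hnorm (z : E) : ‖T z‖ = ‖z‖ := by
    obtain ⟨a, ha, b, hb, rfl⟩ := K.exists_add_mem_mem_orthogonal z
    rw [hT ⟨a, ha⟩ ⟨b, hb⟩, ← mul_self_inj (norm_nonneg _) (norm_nonneg _),
      norm_add_sq_eq_norm_sq_add_norm_sq_of_inner_eq_zero _ _
        (L.inner_right_of_mem_orthogonal (e _).2 (f _).2),
      norm_add_sq_eq_norm_sq_add_norm_sq_of_inner_eq_zero _ _
        (K.inner_right_of_mem_orthogonal ha hb)]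
    change ‖e ⟨a, ha⟩‖ * ‖e ⟨a, ha⟩‖ + ‖f ⟨b, hb⟩‖ * ‖f ⟨b, hb⟩‖ = _
    rw [e.norm_map, f.norm_map]
    rfl
  have hsurj : Function.Surjective T := by
    intro w
    obtain ⟨c, hc, d, hd, rfl⟩ := L.exists_add_mem_mem_orthogonal w
    exact ⟨e.symm ⟨c, hc⟩ + f.symm ⟨d, hd⟩, by simp [hT]⟩
  exact ⟨LinearIsometryEquiv.ofSurjective ⟨T, hnorm⟩ hsurj, fun k => by simpa using hT k 0⟩

namespace LinearPMap

section Neg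

variable {R E F : Type*} [CommRing R] [AddCommGroup E] [AddCommGroup F] [Module R E] [Module R F]

theorem mem_neg_graph_iff (f : E →ₗ.[R] F) {p : E × F} :
    p ∈ (-f).graph ↔ (p.1, -p.2) ∈ f.graph := by
  simp only [mem_graph_iff, neg_apply, neg_eq_iff_eq_neg]
  rfl

theorem IsClosed.neg [TopologicalSpace E] [TopologicalSpace F] [ContinuousNeg F] {f : E →ₗ.[R] F}
    (hf : f.IsClosed) : (-f).IsClosed := by
  have : ((-f).graph : Set (E × F)) = (fun p : E × F => (p.1, -p.2)) ⁻¹' f.graph := by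
    ext p; exact mem_neg_graph_iff f
  rw [LinearPMap.IsClosed, this]
  exact hf.preimage (by fun_prop)

end Neg

variable {𝕜 E F : Type*} [RCLike 𝕜] [NormedAddCommGroup E] [InnerProductSpace 𝕜 E]
  [NormedAddCommGroup F] [InnerProductSpace 𝕜 F]

theorem mem_adjoint_graph_iff [CompleteSpace E] {T : E →ₗ.[𝕜] F} (hT : Dense (T.domain : Set E))
    {y : F} {w : E} : (y, w) ∈ T†.graph ↔ ∀ x : T.domain, ⟪T x, y⟫_𝕜 = ⟪(x : E), w⟫_𝕜 := by
  simp [adjoint_graph_eq_graph_adjoint hT, sub_eq_zero, mem_graph_iff]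

variable {B : E →ₗ.[𝕜] E}

def IsSkewSymmetric (B : E →ₗ.[𝕜] E) : Prop :=
  ∀ x y : B.domain, ⟪B x, (y : E)⟫_𝕜 = -⟪(x : E), B y⟫_𝕜

theorem isSkewSymmetric_iff_le_neg_adjoint [CompleteSpace E] (hd : Dense (B.domain : Set E)) :
    B.IsSkewSymmetric ↔ B ≤ -B† := by
  rw [← le_graph_iff]
  constructor
  · rintro hs ⟨a, b⟩ hp
    obtain ⟨x, rfl, rfl⟩ := B.mem_graph_iff.mp hp
    rw [mem_neg_graph_iff, mem_adjoint_graph_iff hd]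
    intro y
    rw [hs, inner_neg_right]
  · intro h x y
    have := (mem_adjoint_graph_iff hd).mp ((mem_neg_graph_iff _).mp (h (B.mem_graph y))) x
    rw [this, inner_neg_right]

abbrev rangeOneSub (B : E →ₗ.[𝕜] E) : Submodule 𝕜 E := LinearMap.range (B.domain.subtype - B.toFun)

abbrev rangeOneAdd (B : E →ₗ.[𝕜] E) : Submodule 𝕜 E := LinearMap.range (B.domain.subtype + B.toFun)

theorem rangeOneAdd_eq_rangeOneSub_neg : B.rangeOneAdd = (-B).rangeOneSub := by
  rw [rangeOneAdd, rangeOneSub, ← sub_neg_eq_add]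
  rfl

namespace IsSkewSymmetric

variable (hs : B.IsSkewSymmetric)
include hs

theorem neg : (-B).IsSkewSymmetric := fun x y => by
  simp only [neg_apply, inner_neg_left, inner_neg_right, hs x y]

theorem re_inner_apply_self (x : B.domain) : RCLike.re ⟪(x : E), B x⟫_𝕜 = 0 := by
  have h := inner_re_symm (𝕜 := 𝕜) (x : E) (B x)
  rw [hs, AddMonoidHom.map_neg] at h
  linarith

theorem norm_sub_apply_sq (x : B.domain) : ‖(x : E) - B x‖ ^ 2 = ‖(x : E)‖ ^ 2 + ‖B x‖ ^ 2 := by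
  rw [@norm_sub_sq 𝕜, hs.re_inner_apply_self]; ring

theorem norm_add_apply_sq (x : B.domain) : ‖(x : E) + B x‖ ^ 2 = ‖(x : E)‖ ^ 2 + ‖B x‖ ^ 2 := by
  rw [@norm_add_sq 𝕜, hs.re_inner_apply_self]; ring

theorem norm_add_apply_eq_norm_sub_apply (x : B.domain) : ‖(x : E) + B x‖ = ‖(x : E) - B x‖ := by
  rw [← sq_eq_sq₀ (norm_nonneg _) (norm_nonneg _), hs.norm_add_apply_sq, hs.norm_sub_apply_sq]

theorem norm_le_norm_sub_apply (x : B.domain) : ‖(x : E)‖ ≤ ‖(x : E) - B x‖ := by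
  refine le_of_sq_le_sq ?_ (norm_nonneg _)
  rw [hs.norm_sub_apply_sq]
  exact le_add_of_nonneg_right (sq_nonneg _)

theorem norm_apply_le_norm_sub_apply (x : B.domain) : ‖B x‖ ≤ ‖(x : E) - B x‖ := by
  refine le_of_sq_le_sq ?_ (norm_nonneg _)
  rw [hs.norm_sub_apply_sq]
  exact le_add_of_nonneg_left (sq_nonneg _)

theorem eq_zero_of_apply_eq {x : B.domain} (h : B x = x) : x = 0 := by
  have hx := hs.norm_le_norm_sub_apply x
  rw [h, sub_self, norm_zero] at hx
  exact Subtype.ext (norm_le_zero_iff.mp hx)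

theorem eq_zero_of_apply_eq_neg {x : B.domain} (h : B x = -(x : E)) : x = 0 := by
  have hx := hs.norm_le_norm_sub_apply x
  rw [← hs.norm_add_apply_eq_norm_sub_apply, h, add_neg_cancel, norm_zero] at hx
  exact Subtype.ext (norm_le_zero_iff.mp hx)

theorem injective_sub : Function.Injective (B.domain.subtype - B.toFun) :=
  (injective_iff_map_eq_zero _).mpr fun _ hx => hs.eq_zero_of_apply_eq (sub_eq_zero.mp hx).symm

theorem injective_add : Function.Injective (B.domain.subtype + B.toFun) :=
  (injective_iff_map_eq_zero _).mpr fun _ hx =>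
    hs.eq_zero_of_apply_eq_neg (eq_neg_of_add_eq_zero_right hx)

theorem isClosed_rangeOneSub [CompleteSpace E] (hc : B.IsClosed) :
    _root_.IsClosed (B.rangeOneSub : Set E) := by
  have : CompleteSpace B.graph := hc.completeSpace_coe
  let L : B.graph →L[𝕜] E :=
    (ContinuousLinearMap.fst 𝕜 E E - ContinuousLinearMap.snd 𝕜 E E).comp B.graph.subtypeL
  have hL : Set.range L = B.rangeOneSub := by
    ext z
    constructor
    · rintro ⟨⟨p, hp⟩, rfl⟩
      obtain ⟨x, h1, h2⟩ := B.mem_graph_iff.mp hp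
      exact ⟨x, by simp [L, h1, h2]⟩
    · rintro ⟨x, rfl⟩
      exact ⟨⟨_, B.mem_graph x⟩, rfl⟩
  have hanti : AntilipschitzWith 1 L := L.antilipschitz_of_bound <| by
    rintro ⟨⟨a, b⟩, hp⟩
    obtain ⟨x, rfl, rfl⟩ := B.mem_graph_iff.mp hp
    simp only [NNReal.coe_one, one_mul, Submodule.coe_norm, Prod.norm_mk]
    exact max_le (hs.norm_le_norm_sub_apply x) (hs.norm_apply_le_norm_sub_apply x)
  rw [← hL]
  exact hanti.isClosed_range L.uniformContinuous

theorem isClosed_rangeOneAdd [CompleteSpace E] (hc : B.IsClosed) :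
    _root_.IsClosed (B.rangeOneAdd : Set E) := by
  rw [rangeOneAdd_eq_rangeOneSub_neg]
  exact hs.neg.isClosed_rangeOneSub hc.neg

noncomputable def cayley : B.rangeOneSub ≃ₗᵢ[𝕜] B.rangeOneAdd where
  toLinearEquiv := (LinearEquiv.ofInjective _ hs.injective_sub).symm.trans
    (LinearEquiv.ofInjective _ hs.injective_add)
  norm_map' w := by
    obtain ⟨x, rfl⟩ := (LinearEquiv.ofInjective _ hs.injective_sub).surjective w
    simp only [LinearEquiv.trans_apply, LinearEquiv.symm_apply_apply]
    exact hs.norm_add_apply_eq_norm_sub_apply x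

theorem cayley_apply (x : B.domain) :
    (hs.cayley ⟨(x : E) - B x, x, rfl⟩ : E) = (x : E) + B x := by
  have : (⟨(x : E) - B x, x, rfl⟩ : B.rangeOneSub) = LinearEquiv.ofInjective _ hs.injective_sub x :=
    rfl
  rw [this]
  exact congrArg Subtype.val ((LinearEquiv.ofInjective _ hs.injective_add).congr_arg
    ((LinearEquiv.ofInjective _ hs.injective_sub).symm_apply_apply x))

end IsSkewSymmetric

section Deficiency

variable [CompleteSpace E] (hd : Dense (B.domain : Set E))
include hd

theorem mem_orthogonal_rangeOneSub_iff {y : E} : y ∈ B.rangeOneSubᗮ ↔ (y, y) ∈ B†.graph := by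
  simp only [Submodule.mem_orthogonal, LinearMap.mem_range, forall_exists_index,
    forall_apply_eq_imp_iff, mem_adjoint_graph_iff hd]
  refine forall_congr' fun x => ?_
  rw [LinearMap.sub_apply, inner_sub_left, sub_eq_zero, eq_comm]
  rfl

theorem mem_orthogonal_rangeOneAdd_iff {y : E} : y ∈ B.rangeOneAddᗮ ↔ (y, -y) ∈ B†.graph := by
  simp only [Submodule.mem_orthogonal, LinearMap.mem_range, forall_exists_index,
    forall_apply_eq_imp_iff, mem_adjoint_graph_iff hd]
  refine forall_congr' fun x => ?_
  rw [LinearMap.add_apply, inner_add_left, add_eq_zero_iff_eq_neg', inner_neg_right]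
  rfl

noncomputable def deficiencySubEquiv :
    LinearMap.ker (B†.domain.subtype - B†.toFun) ≃ₗᵢ[𝕜] B.rangeOneSubᗮ :=
  (B†.domain.subtypeₗᵢ.comp (LinearMap.ker _).subtypeₗᵢ).equivRange.trans
    (LinearIsometryEquiv.ofEq _ _ <| by
      ext y
      rw [mem_orthogonal_rangeOneSub_iff hd, mem_graph_iff]
      constructor
      · rintro ⟨⟨u, hu⟩, rfl⟩
        exact ⟨u, rfl, (sub_eq_zero.mp hu).symm⟩
      · rintro ⟨u, rfl, hu⟩
        exact ⟨⟨u, sub_eq_zero.mpr hu.symm⟩, rfl⟩)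

noncomputable def deficiencyAddEquiv :
    LinearMap.ker (B†.domain.subtype + B†.toFun) ≃ₗᵢ[𝕜] B.rangeOneAddᗮ :=
  (B†.domain.subtypeₗᵢ.comp (LinearMap.ker _).subtypeₗᵢ).equivRange.trans
    (LinearIsometryEquiv.ofEq _ _ <| by
      ext y
      rw [mem_orthogonal_rangeOneAdd_iff hd, mem_graph_iff]
      constructor
      · rintro ⟨⟨u, hu⟩, rfl⟩
        exact ⟨u, rfl, add_eq_zero_iff_eq_neg'.mp hu⟩
      · rintro ⟨u, rfl, hu⟩
        exact ⟨⟨u, add_eq_zero_iff_eq_neg'.mpr hu⟩, rfl⟩)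

end Deficiency

section Unitary

variable [CompleteSpace E]

theorem IsSkewSymmetric.exists_unitary_iff (hs : B.IsSkewSymmetric) (hc : B.IsClosed) :
    (∃ U : E ≃ₗᵢ[𝕜] E, ∀ x : B.domain, U ((x : E) - B x) = (x : E) + B x) ↔
      Nonempty (B.rangeOneSubᗮ ≃ₗᵢ[𝕜] B.rangeOneAddᗮ) := by
  constructor
  · rintro ⟨U, hU⟩
    have hmap : B.rangeOneSub.map (U.toLinearEquiv : E →ₗ[𝕜] E) = B.rangeOneAdd := by
      rw [rangeOneSub, ← LinearMap.range_comp]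
      congr 1
      exact LinearMap.ext hU
    exact ⟨(U.submoduleMap _).trans (LinearIsometryEquiv.ofEq _ _ <|
      (Submodule.map_orthogonal_equiv _ U).trans (congrArg _ hmap))⟩
  · rintro ⟨φ⟩
    have : CompleteSpace B.rangeOneSub := (hs.isClosed_rangeOneSub hc).completeSpace_coe
    have : CompleteSpace B.rangeOneAdd := (hs.isClosed_rangeOneAdd hc).completeSpace_coe
    obtain ⟨U, hU⟩ := hs.cayley.exists_extension φ
    exact ⟨U, fun x => (hU ⟨_, x, rfl⟩).trans (hs.cayley_apply x)⟩

theorem exists_unitary_of_eq_neg_adjoint (hd : Dense (B.domain : Set E)) (hB : B = -B†) :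
    ∃ U : E ≃ₗᵢ[𝕜] E, ∀ x : B.domain, U ((x : E) - B x) = (x : E) + B x := by
  have hs : B.IsSkewSymmetric := (isSkewSymmetric_iff_le_neg_adjoint hd).mpr hB.le
  have hc : B.IsClosed := by
    rw [hB]
    exact (adjoint_isClosed hd).neg
  have hsub : B.rangeOneSubᗮ = ⊥ := by
    refine (Submodule.eq_bot_iff _).mpr fun y hy => ?_
    have : (y, -y) ∈ B.graph := by
      rw [hB, mem_neg_graph_iff, neg_neg]
      exact (mem_orthogonal_rangeOneSub_iff hd).mp hy
    obtain ⟨x, rfl, hx⟩ := B.mem_graph_iff.mp this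
    simp [hs.eq_zero_of_apply_eq_neg hx]
  have hadd : B.rangeOneAddᗮ = ⊥ := by
    refine (Submodule.eq_bot_iff _).mpr fun y hy => ?_
    have : (y, y) ∈ B.graph := by
      rw [hB, mem_neg_graph_iff]
      exact (mem_orthogonal_rangeOneAdd_iff hd).mp hy
    obtain ⟨x, rfl, hx⟩ := B.mem_graph_iff.mp this
    simp [hs.eq_zero_of_apply_eq hx]
  exact (hs.exists_unitary_iff hc).mpr ⟨LinearIsometryEquiv.ofEq _ _ (hsub.trans hadd.symm)⟩

end Unitary

end LinearPMap

namespace LinearIsometryEquiv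

open LinearPMap

variable {𝕜 E : Type*} [RCLike 𝕜] [NormedAddCommGroup E] [InnerProductSpace 𝕜 E]

/-- The inverse Cayley transform `(U - 1)(U + 1)⁻¹`, defined through its graph. -/
noncomputable def inverseCayley (U : E ≃ₗᵢ[𝕜] E) : E →ₗ.[𝕜] E :=
  (LinearMap.range ((LinearMap.id + (U.toLinearEquiv : E →ₗ[𝕜] E)).prod
    ((U.toLinearEquiv : E →ₗ[𝕜] E) - LinearMap.id))).toLinearPMap

variable {U : E ≃ₗᵢ[𝕜] E}

theorem eq_zero_of_apply_eq_neg {B : E →ₗ.[𝕜] E} (hd : Dense (B.domain : Set E))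
    (hB : ∀ x : B.domain, U ((x : E) - B x) = (x : E) + B x) {y : E} (hy : U y = -y) : y = 0 := by
  refine hd.eq_zero_of_inner_left 𝕜 fun v hv => ?_
  have hU := congrArg (⟪y, ·⟫_𝕜) (hB ⟨v, hv⟩)
  conv_lhs at hU => rw [← neg_neg y, ← hy, inner_neg_left, U.inner_map_map]
  simp only [inner_add_right, inner_sub_right] at hU
  have : (2 : 𝕜) * ⟪y, v⟫_𝕜 = 0 := by linear_combination -hU
  exact (mul_eq_zero.mp this).resolve_left two_ne_zero

variable (hU : ∀ y, U y = -y → y = 0)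
include hU

theorem mem_graph_inverseCayley {p : E × E} :
    p ∈ U.inverseCayley.graph ↔ ∃ y, (y + U y, U y - y) = p := by
  rw [inverseCayley, Submodule.toLinearPMap_graph_eq]
  · rfl
  · rintro _ ⟨y, rfl⟩ h
    have : y = 0 := hU y (eq_neg_of_add_eq_zero_right h)
    simp [this]

theorem mem_graph_inverseCayley_iff_two_smul {a b : E} :
    (a, b) ∈ U.inverseCayley.graph ↔ ∃ y, y + U y = (2 : 𝕜) • a ∧ U y - y = (2 : 𝕜) • b := by
  rw [← Submodule.smul_mem_iff _ (two_ne_zero : (2 : 𝕜) ≠ 0), mem_graph_inverseCayley hU]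
  simp [Prod.ext_iff]

theorem add_apply_mem_domain_inverseCayley (y : E) : y + U y ∈ U.inverseCayley.domain :=
  mem_domain_iff.mpr ⟨_, (mem_graph_inverseCayley hU).mpr ⟨y, rfl⟩⟩

theorem inverseCayley_apply_add_apply (y : E) :
    U.inverseCayley ⟨y + U y, add_apply_mem_domain_inverseCayley hU y⟩ = U y - y :=
  U.inverseCayley.mem_graph_snd_inj (U.inverseCayley.mem_graph _)
    ((mem_graph_inverseCayley hU).mpr ⟨y, rfl⟩) rfl

theorem isSkewSymmetric_inverseCayley : U.inverseCayley.IsSkewSymmetric := by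
  intro z w
  obtain ⟨y, hy⟩ := (mem_graph_inverseCayley hU).mp (U.inverseCayley.mem_graph z)
  obtain ⟨v, hv⟩ := (mem_graph_inverseCayley hU).mp (U.inverseCayley.mem_graph w)
  simp only [Prod.ext_iff] at hy hv
  rw [← hy.1, ← hy.2, ← hv.1, ← hv.2]
  simp only [inner_add_left, inner_add_right, inner_sub_left, inner_sub_right, U.inner_map_map]
  ring

theorem le_inverseCayley {B : E →ₗ.[𝕜] E}
    (hB : ∀ x : B.domain, U ((x : E) - B x) = (x : E) + B x) : B ≤ U.inverseCayley := by
  rw [← le_graph_iff]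
  rintro ⟨a, b⟩ hp
  obtain ⟨x, rfl, rfl⟩ := B.mem_graph_iff.mp hp
  refine (mem_graph_inverseCayley_iff_two_smul hU).mpr ⟨x - B x, ?_, ?_⟩ <;>
    rw [hB x, two_smul] <;> abel

variable [CompleteSpace E]

theorem dense_domain_inverseCayley : Dense (U.inverseCayley.domain : Set E) := by
  rw [Submodule.dense_iff_topologicalClosure_eq_top, Submodule.topologicalClosure_eq_top_iff,
    Submodule.eq_bot_iff]
  intro v hv
  have h : v + U.symm v = 0 := ext_inner_left 𝕜 fun t => by
    have := Submodule.inner_right_of_mem_orthogonal (add_apply_mem_domain_inverseCayley hU t) hv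
    rw [inner_add_left] at this
    rwa [inner_add_right, inner_zero_right, ← U.inner_map_eq_flip]
  have : U.symm v = 0 := hU _ (by rw [U.apply_symm_apply]; exact eq_neg_of_add_eq_zero_left h)
  simpa using this

theorem neg_adjoint_le_inverseCayley : -U.inverseCayley† ≤ U.inverseCayley := by
  rw [← le_graph_iff]
  rintro ⟨a, b⟩ hp
  rw [mem_neg_graph_iff, mem_adjoint_graph_iff (dense_domain_inverseCayley hU)] at hp
  have key : U (a - b) = a + b := ext_inner_left 𝕜 fun s => by
    obtain ⟨t, rfl⟩ := U.surjective s
    have := hp ⟨_, add_apply_mem_domain_inverseCayley hU t⟩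
    rw [inverseCayley_apply_add_apply hU] at this
    rw [U.inner_map_map]
    simp only [inner_sub_left, inner_add_left, inner_sub_right, inner_add_right,
      inner_neg_right] at this ⊢
    linear_combination -this
  refine (mem_graph_inverseCayley_iff_two_smul hU).mpr ⟨a - b, ?_, ?_⟩ <;>
    rw [key, two_smul] <;> abel

theorem inverseCayley_eq_neg_adjoint : U.inverseCayley = -U.inverseCayley† :=
  le_antisymm ((isSkewSymmetric_iff_le_neg_adjoint (dense_domain_inverseCayley hU)).mp
    (isSkewSymmetric_inverseCayley hU)) (neg_adjoint_le_inverseCayley hU)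

end LinearIsometryEquiv

namespace LinearPMap

variable {𝕜 E : Type*} [RCLike 𝕜] [NormedAddCommGroup E] [InnerProductSpace 𝕜 E] [CompleteSpace E]

theorem exists_eq_neg_adjoint_extension_iff {B : E →ₗ.[𝕜] E} (hd : Dense (B.domain : Set E)) :
    (∃ H : E →ₗ.[𝕜] E, Dense (H.domain : Set E) ∧ B ≤ H ∧ H = -H†) ↔
      ∃ U : E ≃ₗᵢ[𝕜] E, ∀ x : B.domain, U ((x : E) - B x) = (x : E) + B x := by
  constructor
  · rintro ⟨H, hHd, hBH, hH⟩
    obtain ⟨U, hU⟩ := exists_unitary_of_eq_neg_adjoint hHd hH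
    refine ⟨U, fun x => ?_⟩
    rw [hBH.2 (y := ⟨x, hBH.1 x.2⟩) rfl]
    exact hU ⟨x, hBH.1 x.2⟩
  · rintro ⟨U, hB⟩
    have hU : ∀ y, U y = -y → y = 0 := fun _ => U.eq_zero_of_apply_eq_neg hd hB
    exact ⟨U.inverseCayley, U.dense_domain_inverseCayley hU, U.le_inverseCayley hU hB,
      U.inverseCayley_eq_neg_adjoint hU⟩

end LinearPMap

open LinearPMap

/-- A skew-symmetric operator `H₀` has a skew-self-adjoint extension if and
only if its deficiency spaces `ker(1 − H₀*)` and `ker(1 + H₀*)` have the same Hilbert space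
dimension, i.e. are isometrically isomorphic as Hilbert spaces. -/
theorem stmt_7 {ℋ : Type*}
    [NormedAddCommGroup ℋ] [InnerProductSpace ℂ ℋ] [CompleteSpace ℋ]
    (H₀ : ℋ →ₗ.[ℂ] ℋ)
    (hdense : Dense (H₀.domain : Set ℋ)) (hclosed : H₀.IsClosed)
    (hskew : H₀ ≤ -H₀.adjoint) :
    (∃ H : ℋ →ₗ.[ℂ] ℋ, Dense (H.domain : Set ℋ) ∧ H₀ ≤ H ∧ H = -H.adjoint) ↔
      Nonempty
        ((LinearMap.ker (H₀.adjoint.domain.subtype - H₀.adjoint.toFun)) ≃ₗᵢ[ℂ]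
          (LinearMap.ker (H₀.adjoint.domain.subtype + H₀.adjoint.toFun))) := by
  have hs : H₀.IsSkewSymmetric := (isSkewSymmetric_iff_le_neg_adjoint hdense).mpr hskew
  rw [exists_eq_neg_adjoint_extension_iff hdense, hs.exists_unitary_iff hclosed]
  exact ⟨fun ⟨e⟩ => ⟨(deficiencySubEquiv hdense).trans (e.trans (deficiencyAddEquiv hdense).symm)⟩,
    fun ⟨e⟩ => ⟨(deficiencySubEquiv hdense).symm.trans (e.trans (deficiencyAddEquiv hdense))⟩⟩
end

section
/- Let H₀ be a skew-symmetric operator, set 𝒢₁ := ker(1 − H₀*) and 𝒢₂ := ker(1 + H₀*), and let H := H₀* restricted to the domain D(H₀) ∔ 𝒢₂. Then the Hilbert space adjoint of H is H* = −H₀* restricted to the domain D(H₀) ∔ 𝒢₁; that is, D(H*) = D(H₀) ∔ 𝒢₁ and H*y = −H₀*y for all y in this domain. -/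
open scoped InnerProductSpace

section AuxStmt10
variable {ℋ : Type*} [NormedAddCommGroup ℋ] [InnerProductSpace ℂ ℋ] [CompleteSpace ℋ]

omit [CompleteSpace ℋ] in
theorem aux_mem_ker_map_sub (T : ℋ →ₗ.[ℂ] ℋ) (g : ℋ) :
    g ∈ (LinearMap.ker (T.domain.subtype - T.toFun)).map T.domain.subtype ↔
      ∃ hg : g ∈ T.domain, T ⟨g, hg⟩ = g := by
  constructor
  · rintro ⟨x, hx, rfl⟩
    rw [SetLike.mem_coe, LinearMap.mem_ker, LinearMap.sub_apply] at hx
    refine ⟨x.2, ?_⟩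
    have hx' : T.toFun x = (x : ℋ) := by
      rw [sub_eq_zero] at hx; exact hx.symm
    simpa using hx'
  · rintro ⟨hg, hTg⟩
    refine ⟨⟨g, hg⟩, ?_, rfl⟩
    show T.domain.subtype _ - T.toFun _ = 0
    rw [show T.toFun ⟨g, hg⟩ = g from hTg]; simp

omit [CompleteSpace ℋ] in
theorem aux_mem_ker_map_add (T : ℋ →ₗ.[ℂ] ℋ) (g : ℋ) :
    g ∈ (LinearMap.ker (T.domain.subtype + T.toFun)).map T.domain.subtype ↔
      ∃ hg : g ∈ T.domain, T ⟨g, hg⟩ = -g := by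
  constructor
  · rintro ⟨x, hx, rfl⟩
    rw [SetLike.mem_coe, LinearMap.mem_ker, LinearMap.add_apply] at hx
    refine ⟨x.2, ?_⟩
    have hx' : T.toFun x = -(x : ℋ) := by
      rw [add_eq_zero_iff_eq_neg] at hx; exact (neg_eq_iff_eq_neg.mpr hx).symm
    simpa using hx'
  · rintro ⟨hg, hTg⟩
    refine ⟨⟨g, hg⟩, ?_, rfl⟩
    show T.domain.subtype _ + T.toFun _ = 0
    rw [show T.toFun ⟨g, hg⟩ = -g from hTg]; simp

theorem aux_range_closed (H₀ : ℋ →ₗ.[ℂ] ℋ) (hclosed : H₀.IsClosed)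
    (hre : ∀ x : H₀.domain, ‖(x : ℋ) + H₀ x‖ ^ 2 = ‖(x : ℋ)‖ ^ 2 + ‖H₀ x‖ ^ 2) :
    IsClosed ((LinearMap.range (H₀.domain.subtype + H₀.toFun)) : Set ℋ) := by
  haveI : CompleteSpace H₀.graph := hclosed.completeSpace_coe
  set f : H₀.graph → ℋ := fun p => (p : ℋ × ℋ).1 + (p : ℋ × ℋ).2 with hf
  have hsub : ∀ p q : H₀.graph, ∃ x : H₀.domain,
      (x : ℋ) = (p : ℋ × ℋ).1 - (q : ℋ × ℋ).1 ∧ H₀ x = (p : ℋ × ℋ).2 - (q : ℋ × ℋ).2 := by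
    intro p q
    have hm : ((p : ℋ × ℋ) - (q : ℋ × ℋ)) ∈ H₀.graph := sub_mem p.2 q.2
    rcases H₀.mem_graph_iff.mp hm with ⟨x, hx1, hx2⟩
    exact ⟨x, hx1, hx2⟩
  have hanti : AntilipschitzWith 1 f := by
    apply AntilipschitzWith.of_le_mul_dist
    intro p q
    rcases hsub p q with ⟨x, hx1, hx2⟩
    have h2 : dist (f p) (f q) = ‖(x : ℋ) + H₀ x‖ := by
      rw [hf]; simp only [dist_eq_norm]
      congr 1
      rw [hx1, hx2]; abel
    have h1 : dist p q = max ‖(x : ℋ)‖ ‖H₀ x‖ := by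
      rw [Subtype.dist_eq, Prod.dist_eq, dist_eq_norm, dist_eq_norm, hx1, hx2]
    rw [h1, h2, NNReal.coe_one, one_mul]
    have := hre x
    have h3 : ‖(x : ℋ)‖ ≤ ‖(x : ℋ) + H₀ x‖ := by
      nlinarith [norm_nonneg ((x : ℋ) + H₀ x), norm_nonneg (H₀ x), norm_nonneg (x : ℋ)]
    have h4 : ‖H₀ x‖ ≤ ‖(x : ℋ) + H₀ x‖ := by
      nlinarith [norm_nonneg ((x : ℋ) + H₀ x), norm_nonneg (H₀ x), norm_nonneg (x : ℋ)]
    exact max_le h3 h4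
  have hlip : LipschitzWith 2 f := by
    apply LipschitzWith.of_dist_le_mul
    intro p q
    rcases hsub p q with ⟨x, hx1, hx2⟩
    have h2 : dist (f p) (f q) = ‖(x : ℋ) + H₀ x‖ := by
      rw [hf]; simp only [dist_eq_norm]
      congr 1
      rw [hx1, hx2]; abel
    have h1 : dist p q = max ‖(x : ℋ)‖ ‖H₀ x‖ := by
      rw [Subtype.dist_eq, Prod.dist_eq, dist_eq_norm, dist_eq_norm, hx1, hx2]
    rw [h1, h2]
    calc ‖(x : ℋ) + H₀ x‖ ≤ ‖(x : ℋ)‖ + ‖H₀ x‖ := norm_add_le _ _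
      _ ≤ 2 * max ‖(x : ℋ)‖ ‖H₀ x‖ := by
          rw [two_mul]
          exact add_le_add (le_max_left _ _) (le_max_right _ _)
  have hrange : Set.range f = ((LinearMap.range (H₀.domain.subtype + H₀.toFun)) : Set ℋ) := by
    ext z
    constructor
    · rintro ⟨p, rfl⟩
      rcases H₀.mem_graph_iff.mp p.2 with ⟨x, hx1, hx2⟩
      exact ⟨x, by show (x : ℋ) + H₀ x = f p; rw [hx1, hx2, hf]⟩
    · rintro ⟨x, rfl⟩
      exact ⟨⟨((x : ℋ), H₀ x), H₀.mem_graph x⟩, rfl⟩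
  rw [← hrange]
  exact hanti.isClosed_range hlip.uniformContinuous

end AuxStmt10

/-- For skew-symmetric `H₀`, let `𝒢₁ := ker(1 − H₀*)`,
`𝒢₂ := ker(1 + H₀*)` (regarded as subspaces of `ℋ`) and let `H` be the restriction of `H₀*`
to `D(H₀) ∔ 𝒢₂`. Then `H* = −H₀*|_{D(H₀) ∔ 𝒢₁}`, i.e. `D(H*) = D(H₀) ∔ 𝒢₁` and
`H*y = −H₀*y` there. -/
theorem stmt_10 {ℋ : Type*}
    [NormedAddCommGroup ℋ] [InnerProductSpace ℂ ℋ] [CompleteSpace ℋ]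
    (H₀ : ℋ →ₗ.[ℂ] ℋ)
    (hdense : Dense (H₀.domain : Set ℋ)) (hclosed : H₀.IsClosed)
    (hskew : H₀ ≤ -H₀.adjoint)
    -- `𝒢₁ = ker(1 − H₀*)` and `𝒢₂ = ker(1 + H₀*)` as subspaces of `ℋ`:
    (G₁ G₂ : Submodule ℂ ℋ)
    (hG₁ : G₁ = (LinearMap.ker
      (H₀.adjoint.domain.subtype - H₀.adjoint.toFun)).map H₀.adjoint.domain.subtype)
    (hG₂ : G₂ = (LinearMap.ker
      (H₀.adjoint.domain.subtype + H₀.adjoint.toFun)).map H₀.adjoint.domain.subtype)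
    -- `H = H₀*` restricted to `D(H₀) ∔ 𝒢₂`:
    (H : ℋ →ₗ.[ℂ] ℋ)
    (hH : H = H₀.adjoint.domRestrict (H₀.domain ⊔ G₂)) :
    H.adjoint.domain = H₀.domain ⊔ G₁ ∧
      ∀ y : H.adjoint.domain, ∃ hy : (y : ℋ) ∈ H₀.adjoint.domain,
        H.adjoint y = -H₀.adjoint (⟨(y : ℋ), hy⟩ : H₀.adjoint.domain) := by
  set T := H₀.adjoint with hTdef
  -- basic facts
  have hDT : H₀.domain ≤ T.domain := hskew.1
  have hTx₀ : ∀ (u : T.domain) (hu : (u : ℋ) ∈ H₀.domain),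
      T u = - H₀ ⟨(u : ℋ), hu⟩ := by
    intro u hu
    have h := hskew.2 (x := ⟨(u : ℋ), hu⟩) (y := u) rfl
    rw [LinearPMap.neg_apply] at h
    exact neg_eq_iff_eq_neg.mp h.symm
  have hFA : ∀ (y : T.domain) (x : H₀.domain),
      ⟪(T y : ℋ), (x : ℋ)⟫_ℂ = ⟪(y : ℋ), (H₀ x : ℋ)⟫_ℂ :=
    LinearPMap.adjoint_isFormalAdjoint hdense
  have hG₁mem : ∀ g : ℋ, g ∈ G₁ ↔ ∃ hg : g ∈ T.domain, T ⟨g, hg⟩ = g := by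
    intro g; rw [hG₁]; exact aux_mem_ker_map_sub T g
  have hG₂mem : ∀ g : ℋ, g ∈ G₂ ↔ ∃ hg : g ∈ T.domain, T ⟨g, hg⟩ = -g := by
    intro g; rw [hG₂]; exact aux_mem_ker_map_add T g
  have hG₁T : G₁ ≤ T.domain := fun g hg => ((hG₁mem g).mp hg).choose
  have hG₂T : G₂ ≤ T.domain := fun g hg => ((hG₂mem g).mp hg).choose
  -- facts about H
  have hHle : H ≤ T := hH ▸ LinearPMap.domRestrict_le
  have hHdom : H.domain = H₀.domain ⊔ G₂ := by
    rw [hH, LinearPMap.domRestrict_domain, inf_eq_left.mpr (sup_le hDT hG₂T)]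
  have hHapp : ∀ (x : H.domain), H x = T ⟨(x : ℋ), hHle.1 x.2⟩ := fun x => hHle.2 rfl
  have hD₀H : H₀.domain ≤ H.domain := le_of_le_of_eq le_sup_left hHdom.symm
  have hdenseH : Dense (H.domain : Set ℋ) :=
    hdense.mono (SetLike.coe_subset_coe.mpr hD₀H)
  -- key skew-pairing identity, case u ∈ D₀
  have case1 : ∀ (u v : T.domain), (u : ℋ) ∈ H₀.domain →
      ⟪(T u : ℋ), (v : ℋ)⟫_ℂ = -⟪(u : ℋ), (T v : ℋ)⟫_ℂ := by
    intro u v hu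
    have h1 : T u = - H₀ ⟨(u : ℋ), hu⟩ := hTx₀ u hu
    have h2 := hFA v ⟨(u : ℋ), hu⟩
    have h3 := congrArg (starRingEnd ℂ) h2
    simp only [inner_conj_symm] at h3
    rw [h1, inner_neg_left, h3]
  -- key skew-pairing identity, case v ∈ D₀
  have case2 : ∀ (u v : T.domain), (v : ℋ) ∈ H₀.domain →
      ⟪(T u : ℋ), (v : ℋ)⟫_ℂ = -⟪(u : ℋ), (T v : ℋ)⟫_ℂ := by
    intro u v hv
    have h1 := case1 v u hv
    have h2 := congrArg (starRingEnd ℂ) h1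
    simp only [inner_conj_symm, map_neg] at h2
    linear_combination h2
  -- the general pairing identity
  have key : ∀ (u v : T.domain), (u : ℋ) ∈ H₀.domain ⊔ G₁ → (v : ℋ) ∈ H₀.domain ⊔ G₂ →
      ⟪(T u : ℋ), (v : ℋ)⟫_ℂ = -⟪(u : ℋ), (T v : ℋ)⟫_ℂ := by
    intro u v hu hv
    rcases Submodule.mem_sup.mp hu with ⟨a, ha, b, hb, hab⟩
    rcases Submodule.mem_sup.mp hv with ⟨c, hc, d, hd, hcd⟩
    rcases (hG₁mem b).mp hb with ⟨hbT, hTb⟩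
    rcases (hG₂mem d).mp hd with ⟨hdT, hTd⟩
    set A : T.domain := ⟨a, hDT ha⟩
    set B : T.domain := ⟨b, hbT⟩
    set C : T.domain := ⟨c, hDT hc⟩
    set D : T.domain := ⟨d, hdT⟩
    have hAc : (A : ℋ) = a := rfl
    have hBc : (B : ℋ) = b := rfl
    have hCc : (C : ℋ) = c := rfl
    have hDc : (D : ℋ) = d := rfl
    have hu' : u = A + B := Subtype.ext (by rw [Submodule.coe_add, hAc, hBc, hab])
    have hv' : v = C + D := Subtype.ext (by rw [Submodule.coe_add, hCc, hDc, hcd])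
    have p1 := case1 A C ha
    have p2 := case1 A D ha
    have p3 := case2 B C hc
    have p4 : ⟪(T B : ℋ), (D : ℋ)⟫_ℂ = -⟪(B : ℋ), (T D : ℋ)⟫_ℂ := by
      rw [hTb, hTd, hBc, hDc, inner_neg_right, neg_neg]
    rw [hu', hv', LinearPMap.map_add, LinearPMap.map_add]
    simp only [Submodule.coe_add, inner_add_left, inner_add_right]
    linear_combination p1 + p2 + p3 + p4
  -- the candidate formal adjoint S of H
  set S := (-T).domRestrict (H₀.domain ⊔ G₁) with hSdef
  have hSdomle : H₀.domain ⊔ G₁ ≤ T.domain := sup_le hDT hG₁T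
  have hSdom : S.domain = H₀.domain ⊔ G₁ := by
    rw [hSdef, LinearPMap.domRestrict_domain, LinearPMap.neg_domain,
      inf_eq_left.mpr hSdomle]
  have hSle : S ≤ -T := LinearPMap.domRestrict_le
  have hSmemT : ∀ y : S.domain, (y : ℋ) ∈ T.domain := fun y => hSle.1 y.2
  have hSapp : ∀ (y : S.domain), S y = -(T ⟨(y : ℋ), hSmemT y⟩) := by
    intro y
    have := hSle.2 (x := y) (y := ⟨(y : ℋ), hSmemT y⟩) rfl
    rwa [LinearPMap.neg_apply] at this
  have hFAH : H.IsFormalAdjoint S := by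
    intro x y
    have hx' : (x : ℋ) ∈ T.domain := hHle.1 x.2
    have hy' : (y : ℋ) ∈ T.domain := hSmemT y
    have hk := key ⟨(y : ℋ), hy'⟩ ⟨(x : ℋ), hx'⟩ (hSdom ▸ y.2) (hHdom ▸ x.2)
    have hk' := congrArg (starRingEnd ℂ) hk
    simp only [inner_conj_symm, map_neg] at hk'
    rw [hHapp x, hSapp y, inner_neg_right]
    exact (neg_eq_iff_eq_neg.mpr hk').symm
  have hSH : S ≤ H.adjoint := hFAH.le_adjoint hdenseH
  have hsup_le : H₀.domain ⊔ G₁ ≤ H.adjoint.domain := hSdom ▸ hSH.1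
  -- hard direction
  have hadj : H.adjoint.IsFormalAdjoint H := LinearPMap.adjoint_isFormalAdjoint hdenseH
  have hyT : ∀ y : H.adjoint.domain, (y : ℋ) ∈ T.domain := by
    intro y
    apply LinearPMap.mem_adjoint_domain_of_exists
    refine ⟨-(H.adjoint y), fun x => ?_⟩
    have hxH : (x : ℋ) ∈ H.domain := hD₀H x.2
    have h2 : H ⟨(x : ℋ), hxH⟩ = - H₀ x := by
      rw [hHapp ⟨(x : ℋ), hxH⟩]
      exact (hTx₀ ⟨(x : ℋ), hHle.1 hxH⟩ x.2).trans (by congr)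
    have h1 : ⟪(H.adjoint y : ℋ), (x : ℋ)⟫_ℂ
        = ⟪(y : ℋ), (H ⟨(x : ℋ), hxH⟩ : ℋ)⟫_ℂ := hadj y ⟨(x : ℋ), hxH⟩
    rw [h2, inner_neg_right] at h1
    rw [inner_neg_left, h1, neg_neg]
  have hTy : ∀ y : H.adjoint.domain, T ⟨(y : ℋ), hyT y⟩ = -(H.adjoint y) := by
    intro y
    apply LinearPMap.adjoint_apply_eq hdense
    intro x
    have hxH : (x : ℋ) ∈ H.domain := hD₀H x.2
    have h2 : H ⟨(x : ℋ), hxH⟩ = - H₀ x := by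
      rw [hHapp ⟨(x : ℋ), hxH⟩]
      exact (hTx₀ ⟨(x : ℋ), hHle.1 hxH⟩ x.2).trans (by congr)
    have h1 : ⟪(H.adjoint y : ℋ), (x : ℋ)⟫_ℂ
        = ⟪(y : ℋ), (H ⟨(x : ℋ), hxH⟩ : ℋ)⟫_ℂ := hadj y ⟨(x : ℋ), hxH⟩
    rw [h2, inner_neg_right] at h1
    rw [inner_neg_left, h1, neg_neg]
  -- skewness on the diagonal: ‖x + H₀ x‖² = ‖x‖² + ‖H₀ x‖²
  have hre : ∀ x : H₀.domain, ‖(x : ℋ) + H₀ x‖ ^ 2 = ‖(x : ℋ)‖ ^ 2 + ‖H₀ x‖ ^ 2 := by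
    intro x
    have h1 : ⟪(T ⟨(x : ℋ), hDT x.2⟩ : ℋ), (x : ℋ)⟫_ℂ = ⟪(x : ℋ), (H₀ x : ℋ)⟫_ℂ :=
      hFA ⟨(x : ℋ), hDT x.2⟩ x
    have h2 : (T ⟨(x : ℋ), hDT x.2⟩ : ℋ) = -(H₀ x : ℋ) :=
      (hTx₀ ⟨(x : ℋ), hDT x.2⟩ x.2).trans (by congr)
    rw [h2, inner_neg_left] at h1
    have hzero : RCLike.re ⟪(x : ℋ), (H₀ x : ℋ)⟫_ℂ = 0 := by
      have h3 := congrArg RCLike.re h1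
      simp only [map_neg, inner_re_symm] at h3
      linarith
    rw [@norm_add_sq ℂ _ _ _ _ ((x : ℋ)) (H₀ x), hzero]
    ring
  -- the range R = ran(1 + H₀) and its closedness
  set R := LinearMap.range (H₀.domain.subtype + H₀.toFun) with hRdef
  have hRclosed : IsClosed (R : Set ℋ) := aux_range_closed H₀ hclosed hre
  have hRmem : ∀ z : ℋ, z ∈ R ↔ ∃ x : H₀.domain, (x : ℋ) + H₀ x = z := by
    intro z
    rw [hRdef, LinearMap.mem_range]
    rfl
  -- Rᗮ = G₂
  have hRperp : Rᗮ = G₂ := by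
    ext x
    rw [Submodule.mem_orthogonal]
    constructor
    · intro hx
      have hmem : x ∈ T.domain := by
        apply LinearPMap.mem_adjoint_domain_of_exists
        refine ⟨-x, fun u => ?_⟩
        have h1 := hx _ ((hRmem _).mpr ⟨u, rfl⟩)
        rw [inner_add_left] at h1
        have h2 := congrArg (starRingEnd ℂ) h1
        simp only [map_add, inner_conj_symm, map_zero] at h2
        rw [inner_neg_left]
        linear_combination -h2
      have hval : T ⟨x, hmem⟩ = -x := by
        apply LinearPMap.adjoint_apply_eq hdense
        intro u
        have h1 := hx _ ((hRmem _).mpr ⟨u, rfl⟩)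
        rw [inner_add_left] at h1
        have h2 := congrArg (starRingEnd ℂ) h1
        simp only [map_add, inner_conj_symm, map_zero] at h2
        rw [inner_neg_left]
        linear_combination -h2
      exact (hG₂mem x).mpr ⟨hmem, hval⟩
    · intro hx u hu
      rcases (hRmem u).mp hu with ⟨w, hw⟩
      rcases (hG₂mem x).mp hx with ⟨hxT, hTx⟩
      have h1 := hFA ⟨x, hxT⟩ w
      rw [hTx, inner_neg_left] at h1
      have h2 := congrArg (starRingEnd ℂ) h1
      simp only [inner_conj_symm, map_neg] at h2
      rw [← hw, inner_add_left]
      linear_combination -h2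
  -- conclude
  have main : ∀ y : H.adjoint.domain, (y : ℋ) ∈ H₀.domain ⊔ G₁ := by
    intro y
    haveI : CompleteSpace R := hRclosed.completeSpace_coe
    have hz : (T ⟨(y : ℋ), hyT y⟩ : ℋ) - (y : ℋ) ∈ G₂ᗮ := by
      rw [Submodule.mem_orthogonal]
      intro g hg
      rcases (hG₂mem g).mp hg with ⟨hgT, hTg⟩
      have hgH : g ∈ H.domain := hHdom ▸ Submodule.mem_sup_right hg
      have h2 : H ⟨g, hgH⟩ = -g := by
        rw [hHapp ⟨g, hgH⟩]
        exact (by congr : T ⟨g, hHle.1 hgH⟩ = T ⟨g, hgT⟩).trans hTg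
      have h1 : ⟪(H.adjoint y : ℋ), g⟫_ℂ
          = ⟪(y : ℋ), (H ⟨g, hgH⟩ : ℋ)⟫_ℂ := hadj y ⟨g, hgH⟩
      rw [h2, inner_neg_right] at h1
      have h4 : (H.adjoint y : ℋ) = -(T ⟨(y : ℋ), hyT y⟩ : ℋ) := by
        rw [hTy y, neg_neg]
      rw [h4, inner_neg_left] at h1
      have h5 := congrArg (starRingEnd ℂ) h1
      simp only [inner_conj_symm, map_neg] at h5
      rw [inner_sub_right]
      linear_combination -h5
    rw [← hRperp, Submodule.orthogonal_orthogonal] at hz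
    rcases (hRmem _).mp hz with ⟨u, hu⟩
    have huT : ((u : ℋ)) ∈ T.domain := hDT u.2
    have hwT : (y : ℋ) + (u : ℋ) ∈ T.domain := add_mem (hyT y) huT
    have hTw : T ⟨(y : ℋ) + (u : ℋ), hwT⟩ = (y : ℋ) + (u : ℋ) := by
      have hsplit : (⟨(y : ℋ) + (u : ℋ), hwT⟩ : T.domain)
          = ⟨(y : ℋ), hyT y⟩ + ⟨(u : ℋ), huT⟩ := Subtype.ext rfl
      rw [hsplit, LinearPMap.map_add, hTx₀ ⟨(u : ℋ), huT⟩ u.2]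
      have hxx : H₀ ⟨((⟨(u : ℋ), huT⟩ : T.domain) : ℋ), u.2⟩ = H₀ u := by congr
      rw [hxx]
      have h4 : (T ⟨(y : ℋ), hyT y⟩ : ℋ) = (y : ℋ) + ((u : ℋ) + H₀ u) := by
        rw [hu]; abel
      rw [h4]; abel
    have hwG₁ : (y : ℋ) + (u : ℋ) ∈ G₁ := (hG₁mem _).mpr ⟨hwT, hTw⟩
    refine Submodule.mem_sup.mpr ⟨-(u : ℋ), neg_mem u.2, (y : ℋ) + (u : ℋ), hwG₁, by abel⟩
  constructor
  · exact le_antisymm (fun z hz => main ⟨z, hz⟩) hsup_le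
  · intro y
    exact ⟨hyT y, by rw [hTy y, neg_neg]⟩
end

section
/- Let H₀ be a skew-symmetric operator, set 𝒢₁ := ker(1 − H₀*) and 𝒢₂ := ker(1 + H₀*), and assume the direct sum decomposition D(H₀*) = D(H₀) ∔ 𝒢₁ ∔ 𝒢₂ with projections P₁, P₂. Then for every y ∈ D(H₀) ∔ 𝒢₁ one has Re (y + H₀*y, y)_ℋ = ‖y‖² + ‖P₁y‖² ≥ ‖y‖². In particular, the operator y ↦ y + H₀*y is injective on D(H₀) ∔ 𝒢₁. -/
open scoped InnerProductSpace

/-!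
Write `y = y₀ + a` with `y₀ ∈ D(H₀)` and `H₀* a = a`. Then `H₀* y = -H₀ y₀ + a`, and in
`Re (H₀* y, y)` the term `Re (H₀ y₀, y₀)` vanishes by skew-symmetry while the cross terms
`Re (H₀ y₀, a)` and `Re (a, y₀) = Re (H₀* a, y₀) = Re (a, H₀ y₀)` cancel, leaving `‖a‖²`; by
uniqueness of the decomposition `a = P₁ y`. Injectivity follows by applying the identity to the
difference of two such vectors.
-/

namespace LinearPMap

variable {𝕜 E : Type*} [RCLike 𝕜] [NormedAddCommGroup E] [InnerProductSpace 𝕜 E]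
  [CompleteSpace E] {T : E →ₗ.[𝕜] E}

theorem adjoint_apply_eq_neg_of_le_neg_adjoint (hskew : T ≤ -T†) (y : T†.domain)
    (hy : (y : E) ∈ T.domain) : T† y = -T ⟨y, hy⟩ := by
  rw [hskew.2 (x := ⟨y, hy⟩) (y := y) rfl, neg_apply, neg_neg]

theorem re_inner_adjoint_add_of_mem_domain (hT : Dense (T.domain : Set E)) (hskew : T ≤ -T†)
    {y₀ : T†.domain} (hy₀ : (y₀ : E) ∈ T.domain) (a : T†.domain) :
    RCLike.re ⟪T† (y₀ + a), ((y₀ + a : T†.domain) : E)⟫_𝕜 = RCLike.re ⟪T† a, (a : E)⟫_𝕜 := by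
  have hfa := adjoint_isFormalAdjoint hT
  have hTy₀ := adjoint_apply_eq_neg_of_le_neg_adjoint hskew y₀ hy₀
  set u := T ⟨y₀, hy₀⟩
  have hskew_re : RCLike.re ⟪u, (y₀ : E)⟫_𝕜 = 0 := by
    have h : ⟪-u, (y₀ : E)⟫_𝕜 = ⟪(y₀ : E), u⟫_𝕜 := hTy₀ ▸ hfa y₀ ⟨y₀, hy₀⟩
    have h_re := congrArg RCLike.re h
    rw [inner_neg_left, _root_.map_neg, inner_re_symm (y₀ : E)] at h_re
    linarith
  have hcross : RCLike.re ⟪T† a, (y₀ : E)⟫_𝕜 = RCLike.re ⟪u, (a : E)⟫_𝕜 := by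
    rw [hfa a ⟨y₀, hy₀⟩, inner_re_symm]
  rw [map_add, hTy₀, Submodule.coe_add, inner_add_left, inner_add_right, inner_add_right,
    inner_neg_left, inner_neg_left]
  simp only [_root_.map_add, _root_.map_neg, hskew_re, hcross]
  ring

theorem re_inner_add_adjoint_eq (hT : Dense (T.domain : Set E)) (hskew : T ≤ -T†)
    {y y₀ a : T†.domain} (hy₀ : (y₀ : E) ∈ T.domain) (ha : T† a = a) (hy : y = y₀ + a) :
    RCLike.re ⟪(y : E) + T† y, (y : E)⟫_𝕜 = ‖(y : E)‖ ^ 2 + ‖(a : E)‖ ^ 2 := by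
  have hform := re_inner_adjoint_add_of_mem_domain hT hskew hy₀ a
  rw [← hy, ha] at hform
  rw [inner_add_left, _root_.map_add, hform, inner_self_eq_norm_sq, inner_self_eq_norm_sq]

theorem eq_zero_of_add_adjoint_eq_zero (hT : Dense (T.domain : Set E)) (hskew : T ≤ -T†)
    {y y₀ a : T†.domain} (hy₀ : (y₀ : E) ∈ T.domain) (ha : T† a = a) (hy : y = y₀ + a)
    (hzero : (y : E) + T† y = 0) : y = 0 := by
  have hre := re_inner_add_adjoint_eq hT hskew hy₀ ha hy
  rw [hzero, inner_zero_left, _root_.map_zero, eq_comm,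
    add_eq_zero_iff_of_nonneg (sq_nonneg _) (sq_nonneg _)] at hre
  exact Submodule.coe_eq_zero.mp (norm_eq_zero.mp (pow_eq_zero_iff two_ne_zero |>.mp hre.1))

end LinearPMap

theorem stmt_11_general {ℋ : Type*}
    [NormedAddCommGroup ℋ] [InnerProductSpace ℂ ℋ] [CompleteSpace ℋ]
    (H₀ : ℋ →ₗ.[ℂ] ℋ)
    (hdense : Dense (H₀.domain : Set ℋ))
    (hskew : H₀ ≤ -H₀.adjoint)
    (P₁ P₂ : H₀.adjoint.domain →ₗ[ℂ] H₀.adjoint.domain)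
    (huniq : ∀ x a b : H₀.adjoint.domain, H₀.adjoint a = (a : ℋ) → H₀.adjoint b = -(b : ℋ) →
      ((x - a - b : H₀.adjoint.domain) : ℋ) ∈ H₀.domain → a = P₁ x ∧ b = P₂ x) :
    (∀ y : H₀.adjoint.domain,
      (∃ y₀ a : H₀.adjoint.domain,
          ((y₀ : ℋ) ∈ H₀.domain) ∧ H₀.adjoint a = (a : ℋ) ∧ y = y₀ + a) →
        (⟪(y : ℋ) + H₀.adjoint y, (y : ℋ)⟫_ℂ).re = ‖(y : ℋ)‖ ^ 2 + ‖(P₁ y : ℋ)‖ ^ 2 ∧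
          ‖(y : ℋ)‖ ^ 2 ≤ (⟪(y : ℋ) + H₀.adjoint y, (y : ℋ)⟫_ℂ).re) ∧
    (∀ y y' : H₀.adjoint.domain,
      (∃ y₀ a : H₀.adjoint.domain,
          ((y₀ : ℋ) ∈ H₀.domain) ∧ H₀.adjoint a = (a : ℋ) ∧ y = y₀ + a) →
      (∃ y₀ a : H₀.adjoint.domain,
          ((y₀ : ℋ) ∈ H₀.domain) ∧ H₀.adjoint a = (a : ℋ) ∧ y' = y₀ + a) →
      (y : ℋ) + H₀.adjoint y = (y' : ℋ) + H₀.adjoint y' → y = y') := by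
  refine ⟨?_, ?_⟩
  · rintro y ⟨y₀, a, hy₀, ha, rfl⟩
    have hP₁ : a = P₁ (y₀ + a) :=
      (huniq (y₀ + a) a 0 ha (by simp) (by simpa using hy₀)).1
    have hre := LinearPMap.re_inner_add_adjoint_eq hdense hskew hy₀ ha rfl
    rw [← hP₁]
    exact ⟨hre, le_of_le_of_eq (le_add_of_nonneg_right (sq_nonneg _)) hre.symm⟩
  · rintro y y' ⟨y₀, a, hy₀, ha, rfl⟩ ⟨y₀', a', hy₀', ha', rfl⟩ heq
    refine sub_eq_zero.mp (LinearPMap.eq_zero_of_add_adjoint_eq_zero (y₀ := y₀ - y₀')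
      (a := a - a') hdense hskew (sub_mem hy₀ hy₀') ?_ (add_sub_add_comm _ _ _ _) ?_)
    · rw [LinearPMap.map_sub, ha, ha']
      rfl
    · rw [LinearPMap.map_sub, Submodule.coe_sub]
      linear_combination (norm := abel) heq

/-- For skew-symmetric `H₀` with the decomposition
`D(H₀*) = D(H₀) ∔ ker(1 − H₀*) ∔ ker(1 + H₀*)` and projections `P₁, P₂`: for every
`y ∈ D(H₀) ∔ ker(1 − H₀*)` one has `Re (y + H₀*y, y) = ‖y‖² + ‖P₁y‖² ≥ ‖y‖²`; in particular
`y ↦ y + H₀*y` is injective on `D(H₀) ∔ ker(1 − H₀*)`. -/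
theorem stmt_11 {ℋ : Type*}
    [NormedAddCommGroup ℋ] [InnerProductSpace ℂ ℋ] [CompleteSpace ℋ]
    (H₀ : ℋ →ₗ.[ℂ] ℋ)
    (hdense : Dense (H₀.domain : Set ℋ)) (hclosed : H₀.IsClosed)
    (hskew : H₀ ≤ -H₀.adjoint)
    (P₁ P₂ : H₀.adjoint.domain →ₗ[ℂ] H₀.adjoint.domain)
    (hP₁ : ∀ x : H₀.adjoint.domain, H₀.adjoint (P₁ x) = (P₁ x : ℋ))
    (hP₂ : ∀ x : H₀.adjoint.domain, H₀.adjoint (P₂ x) = -(P₂ x : ℋ))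
    (hP₀ : ∀ x : H₀.adjoint.domain, ((x - P₁ x - P₂ x : H₀.adjoint.domain) : ℋ) ∈ H₀.domain)
    (huniq : ∀ x a b : H₀.adjoint.domain, H₀.adjoint a = (a : ℋ) → H₀.adjoint b = -(b : ℋ) →
      ((x - a - b : H₀.adjoint.domain) : ℋ) ∈ H₀.domain → a = P₁ x ∧ b = P₂ x) :
    (∀ y : H₀.adjoint.domain,
      (∃ y₀ a : H₀.adjoint.domain,
          ((y₀ : ℋ) ∈ H₀.domain) ∧ H₀.adjoint a = (a : ℋ) ∧ y = y₀ + a) →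
        (⟪(y : ℋ) + H₀.adjoint y, (y : ℋ)⟫_ℂ).re = ‖(y : ℋ)‖ ^ 2 + ‖(P₁ y : ℋ)‖ ^ 2 ∧
          ‖(y : ℋ)‖ ^ 2 ≤ (⟪(y : ℋ) + H₀.adjoint y, (y : ℋ)⟫_ℂ).re) ∧
    (∀ y y' : H₀.adjoint.domain,
      (∃ y₀ a : H₀.adjoint.domain,
          ((y₀ : ℋ) ∈ H₀.domain) ∧ H₀.adjoint a = (a : ℋ) ∧ y = y₀ + a) →
      (∃ y₀ a : H₀.adjoint.domain,
          ((y₀ : ℋ) ∈ H₀.domain) ∧ H₀.adjoint a = (a : ℋ) ∧ y' = y₀ + a) →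
      (y : ℋ) + H₀.adjoint y = (y' : ℋ) + H₀.adjoint y' → y = y') :=
  stmt_11_general H₀ hdense hskew P₁ P₂ huniq
end

section
/- Let H₀ be a skew-symmetric operator and let (𝒢, Γ₁, Γ₂) be a boundary triplet for H₀. Then an operator H ⊇ H₀ is skew-self-adjoint if and only if there exists a unitary operator L : 𝒢 → 𝒢 such that D(H) = {x ∈ D(H₀*) : (L − 1)Γ₁x + (L + 1)Γ₂x = 0} and Hx = −H₀*x for all x ∈ D(H). -/
/-
Put `A = Γ₁ + Γ₂` and `B = Γ₁ - Γ₂` on `D(H₀*)`. Green's identity turns the boundary form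
`⟪H₀* x, y⟫ + ⟪x, H₀* y⟫` into `(⟪A x, A y⟫ - ⟪B x, B y⟫) / 2`, and the condition
`(L - 1)Γ₁x + (L + 1)Γ₂x = 0` reads `L (A x) = B x`.

If `H₀ ⊆ H ⊆ -H₀*`, then `H*` is the restriction of `H₀*` to the annihilator of `D(H)` for this
form, so `H = -H*` exactly when `D(H)` is Lagrangian (its own annihilator); conversely `H = -H*`
forces `H ⊆ -H₀*` because `H* ⊆ H₀*`. Since `(A, B)` maps `D(H₀*)` onto `𝒢 ⊕ 𝒢`, the Lagrangian
subspaces are exactly the sets `{L (A y) = B y}` with `L` unitary: on a Lagrangian `D` the map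
`A x ↦ B x` is isometric with dense domain and dense range, so it extends to a unitary.
-/

open scoped InnerProductSpace

theorem inner_add_inner_eq_zero_iff {𝕜 E : Type*} [RCLike 𝕜] [NormedAddCommGroup E]
    [InnerProductSpace 𝕜 E] (a b c d : E) :
    ⟪a, d⟫_𝕜 + ⟪b, c⟫_𝕜 = 0 ↔ ⟪a + b, c + d⟫_𝕜 = ⟪a - b, c - d⟫_𝕜 := by
  have : ⟪a + b, c + d⟫_𝕜 - ⟪a - b, c - d⟫_𝕜 = 2 * (⟪a, d⟫_𝕜 + ⟪b, c⟫_𝕜) := by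
    simp only [inner_add_left, inner_add_right, inner_sub_left, inner_sub_right]
    ring
  rw [← sub_eq_zero (a := ⟪a + b, _⟫_𝕜), this, mul_eq_zero]
  simp

theorem sub_add_add_eq_zero_iff_map_add_eq_sub {M F : Type*} [AddCommGroup M] [FunLike F M M]
    [AddHomClass F M M] (L : F) (a b : M) : (L a - a) + (L b + b) = 0 ↔ L (a + b) = a - b := by
  rw [map_add, ← sub_eq_zero (a := L a + L b)]
  constructor <;> intro h <;> rw [← h] <;> abel

theorem LinearMap.surjective_add_sub {R V M : Type*} [CommRing R] [Invertible (2 : R)]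
    [AddCommGroup V] [Module R V] [AddCommGroup M] [Module R M] {f g : V →ₗ[R] M}
    (h : Function.Surjective fun x => (f x, g x)) :
    Function.Surjective fun x => ((f + g) x, (f - g) x) := by
  rintro ⟨u, v⟩
  obtain ⟨x, hx⟩ := h ((⅟2 : R) • (u + v), (⅟2 : R) • (u - v))
  simp only [Prod.ext_iff] at hx
  refine ⟨x, ?_⟩
  simp only [LinearMap.add_apply, LinearMap.sub_apply, hx.1, hx.2, Prod.ext_iff]
  constructor <;> match_scalars <;> simp [← two_mul]

theorem Set.eq_setOf_exists_iff {α S : Type*} [SetLike S α] {s : Set α} {t : S}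
    (hst : s ⊆ t) {p : t → Prop} :
    s = {x | ∃ hx : x ∈ t, p ⟨x, hx⟩} ↔ ∀ y : t, (y : α) ∈ s ↔ p y := by
  constructor
  · rintro rfl y
    simp
  · intro h
    ext x
    exact ⟨fun hx => ⟨hst hx, (h ⟨x, hst hx⟩).1 hx⟩, fun ⟨hx, hp⟩ => (h ⟨x, hx⟩).2 hp⟩

theorem LinearMap.denseRange_of_forall_inner_eq_zero {𝕜 V E : Type*} [RCLike 𝕜]
    [AddCommGroup V] [Module 𝕜 V] [NormedAddCommGroup E] [InnerProductSpace 𝕜 E]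
    [CompleteSpace E] (f : V →ₗ[𝕜] E) (h : ∀ u, (∀ x, ⟪f x, u⟫_𝕜 = 0) → u = 0) :
    DenseRange f := by
  rw [DenseRange, ← LinearMap.coe_range, Submodule.dense_iff_topologicalClosure_eq_top,
    Submodule.topologicalClosure_eq_top_iff, Submodule.eq_bot_iff]
  intro u hu
  exact h u fun x => Submodule.inner_right_of_mem_orthogonal (LinearMap.mem_range_self f x) hu

section Lagrangian

variable {𝕜 V E : Type*} [RCLike 𝕜] [AddCommGroup V] [Module 𝕜 V]
  [NormedAddCommGroup E] [InnerProductSpace 𝕜 E] {A B : V →ₗ[𝕜] E}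

def IsLagrangian (A B : V →ₗ[𝕜] E) (D : Submodule 𝕜 V) : Prop :=
  ∀ y, y ∈ D ↔ ∀ x ∈ D, ⟪A x, A y⟫_𝕜 = ⟪B x, B y⟫_𝕜

theorem IsLagrangian.swap {D : Submodule 𝕜 V} (hD : IsLagrangian A B D) : IsLagrangian B A D :=
  fun y => (hD y).trans <| forall₂_congr fun _ _ => eq_comm

theorem IsLagrangian.denseRange_comp_subtype [CompleteSpace E]
    (hAB : Function.Surjective fun v => (A v, B v)) {D : Submodule 𝕜 V}
    (hD : IsLagrangian A B D) : DenseRange (A ∘ₗ D.subtype) := by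
  refine LinearMap.denseRange_of_forall_inner_eq_zero _ fun u hu => ?_
  obtain ⟨w, hw⟩ := hAB (u, 0)
  simp only [Prod.ext_iff] at hw
  have hwD : w ∈ D :=
    (hD w).2 fun x hx => by rw [hw.1, hw.2, inner_zero_right]; exact hu ⟨x, hx⟩
  simpa [hw.1] using hu ⟨w, hwD⟩

theorem IsLagrangian.exists_linearIsometryEquiv [CompleteSpace E]
    (hAB : Function.Surjective fun v => (A v, B v)) {D : Submodule 𝕜 V}
    (hD : IsLagrangian A B D) : ∃ L : E ≃ₗᵢ[𝕜] E, ∀ y, y ∈ D ↔ L (A y) = B y := by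
  have hnorm (x : D) : ‖(B ∘ₗ D.subtype) x‖ = ‖(A ∘ₗ D.subtype) x‖ := by
    simp only [LinearMap.comp_apply, Submodule.subtype_apply, norm_eq_sqrt_re_inner (𝕜 := 𝕜),
      (hD x).1 x.2 x x.2]
  have hBA : Function.Surjective fun v => (B v, A v) := Prod.swap_surjective.comp hAB
  let L := (LinearEquiv.refl 𝕜 D).extendOfIsometry _ _ (hD.denseRange_comp_subtype hAB)
    (hD.swap.denseRange_comp_subtype hBA) hnorm
  have hL (x : D) : L (A x) = B x := LinearEquiv.extendOfIsometry_eq _ _ _ _ _ _ x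
  refine ⟨L, fun y => ⟨fun hy => hL ⟨y, hy⟩, fun hy => (hD y).2 fun x hx => ?_⟩⟩
  rw [← hy, ← hL ⟨x, hx⟩, LinearIsometryEquiv.inner_map_map]

theorem isLagrangian_of_forall_mem_iff (hAB : Function.Surjective fun v => (A v, B v))
    (L : E ≃ₗᵢ[𝕜] E) {D : Submodule 𝕜 V} (hD : ∀ y, y ∈ D ↔ L (A y) = B y) :
    IsLagrangian A B D := by
  refine fun y => ⟨fun hy x hx => ?_, fun h => (hD y).2 <| ext_inner_left 𝕜 fun v => ?_⟩
  · rw [← (hD x).1 hx, ← (hD y).1 hy, LinearIsometryEquiv.inner_map_map]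
  · obtain ⟨w, hw⟩ := hAB (L.symm v, v)
    simp only [Prod.ext_iff] at hw
    have hwD : w ∈ D := (hD w).2 (by rw [hw.1, hw.2, L.apply_symm_apply])
    calc ⟪v, L (A y)⟫_𝕜 = ⟪L.symm v, A y⟫_𝕜 := by
          rw [← L.inner_map_map (L.symm v), L.apply_symm_apply]
      _ = ⟪B w, B y⟫_𝕜 := by rw [← h w hwD, hw.1]
      _ = ⟪v, B y⟫_𝕜 := by rw [hw.2]

theorem isLagrangian_iff_exists_linearIsometryEquiv [CompleteSpace E]
    (hAB : Function.Surjective fun v => (A v, B v)) {D : Submodule 𝕜 V} :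
    IsLagrangian A B D ↔ ∃ L : E ≃ₗᵢ[𝕜] E, ∀ y, y ∈ D ↔ L (A y) = B y :=
  ⟨(·.exists_linearIsometryEquiv hAB), fun ⟨L, hL⟩ => isLagrangian_of_forall_mem_iff hAB L hL⟩

end Lagrangian

namespace LinearPMap

section Order

variable {R E F : Type*} [Ring R] [AddCommGroup E] [Module R E] [AddCommGroup F] [Module R F]

theorem neg_le_neg {f g : E →ₗ.[R] F} (h : f ≤ g) : -f ≤ -g :=
  ⟨h.1, fun _ _ hxy => by simp only [neg_apply, h.2 hxy]⟩

theorem eq_of_le_of_le_of_domain_eq {f g h : E →ₗ.[R] F} (hf : f ≤ h) (hg : g ≤ h)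
    (hfg : f.domain = g.domain) : f = g :=
  dExt hfg fun _ y hxy => (hf.2 (y := ⟨y, hg.1 y.2⟩) hxy).trans (hg.2 rfl).symm

theorem le_neg_iff {f g : E →ₗ.[R] F} :
    f ≤ -g ↔ ∀ x : f.domain, ∃ hx : (x : E) ∈ g.domain, f x = -g ⟨x, hx⟩ := by
  refine ⟨fun h x => ⟨h.1 x.2, h.2 rfl⟩, fun h => ⟨fun x hx => (h ⟨x, hx⟩).1, fun x y hxy => ?_⟩⟩
  obtain ⟨hx, hfx⟩ := h x
  rw [hfx, neg_apply]
  congr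

end Order

variable {𝕜 E : Type*} [RCLike 𝕜] [NormedAddCommGroup E] [InnerProductSpace 𝕜 E]
  [CompleteSpace E]

theorem adjoint_le_adjoint {F : Type*} [NormedAddCommGroup F] [InnerProductSpace 𝕜 F]
    {T S : E →ₗ.[𝕜] F} (hT : Dense (T.domain : Set E)) (h : T ≤ S) :
    S.adjoint ≤ T.adjoint :=
  IsFormalAdjoint.le_adjoint hT fun x y => by
    rw [apply_comp_inclusion h x]
    exact (adjoint_isFormalAdjoint (hT.mono h.1)).symm _ _

variable {T H : E →ₗ.[𝕜] E}

theorem mem_adjoint_domain_iff_of_le_neg_adjoint (hT : Dense (T.domain : Set E)) (hTH : T ≤ H)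
    (hHT : H ≤ -T.adjoint) (y : T.adjoint.domain) :
    (y : E) ∈ H.adjoint.domain ↔
      ∀ x : T.adjoint.domain, (x : E) ∈ H.domain →
        ⟪T.adjoint x, (y : E)⟫_𝕜 + ⟪(x : E), T.adjoint y⟫_𝕜 = 0 := by
  have hH : Dense (H.domain : Set E) := hT.mono hTH.1
  have hHx (x : T.adjoint.domain) (hx : (x : E) ∈ H.domain) : H ⟨x, hx⟩ = -T.adjoint x :=
    hHT.2 rfl
  constructor
  · intro hy x hx
    have hHy : H.adjoint ⟨y, hy⟩ = T.adjoint y := (adjoint_le_adjoint hT hTH).2 rfl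
    have h : ⟪H ⟨x, hx⟩, (y : E)⟫_𝕜 = ⟪(x : E), T.adjoint y⟫_𝕜 :=
      hHy ▸ (adjoint_isFormalAdjoint hH).symm ⟨x, hx⟩ ⟨y, hy⟩
    rw [← h, hHx x hx, inner_neg_left, add_neg_cancel]
  · intro h
    refine mem_adjoint_domain_of_exists _ ⟨T.adjoint y, fun x => ?_⟩
    have hx := h ⟨x, hHT.1 x.2⟩ x.2
    rw [hHx ⟨x, hHT.1 x.2⟩ x.2, inner_neg_right, ← inner_conj_symm (T.adjoint y),
      ← inner_conj_symm (y : E), eq_neg_of_add_eq_zero_right hx]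
    simp

theorem eq_neg_adjoint_iff_of_le_neg_adjoint (hT : Dense (T.domain : Set E)) (hTH : T ≤ H)
    (hHT : H ≤ -T.adjoint) :
    H = -H.adjoint ↔ ∀ y : T.adjoint.domain, ((y : E) ∈ H.domain ↔
      ∀ x : T.adjoint.domain, (x : E) ∈ H.domain →
        ⟪T.adjoint x, (y : E)⟫_𝕜 + ⟪(x : E), T.adjoint y⟫_𝕜 = 0) := by
  have hHT' : -H.adjoint ≤ -T.adjoint := neg_le_neg (adjoint_le_adjoint hT hTH)
  simp_rw [← mem_adjoint_domain_iff_of_le_neg_adjoint hT hTH hHT]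
  refine ⟨fun h y => SetLike.ext_iff.mp (congrArg domain h) (y : E), fun h => ?_⟩
  refine eq_of_le_of_le_of_domain_eq hHT hHT' (le_antisymm ?_ ?_)
  · exact fun z hz => (h ⟨z, hHT.1 hz⟩).1 hz
  · exact fun z hz => (h ⟨z, hHT'.1 hz⟩).2 hz

theorem eq_neg_adjoint_iff_exists_linearIsometryEquiv {G : Type*} [NormedAddCommGroup G]
    [InnerProductSpace 𝕜 G] [CompleteSpace G] {Γ₁ Γ₂ : T.adjoint.domain →ₗ[𝕜] G}
    (hT : Dense (T.domain : Set E)) (hΓ : Function.Surjective fun x => (Γ₁ x, Γ₂ x))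
    (hGreen : ∀ x y : T.adjoint.domain,
      ⟪T.adjoint x, (y : E)⟫_𝕜 + ⟪(x : E), T.adjoint y⟫_𝕜 = ⟪Γ₁ x, Γ₂ y⟫_𝕜 + ⟪Γ₂ x, Γ₁ y⟫_𝕜)
    (hTH : T ≤ H) (hHT : H ≤ -T.adjoint) :
    H = -H.adjoint ↔ ∃ L : G ≃ₗᵢ[𝕜] G,
      ∀ y : T.adjoint.domain, (y : E) ∈ H.domain ↔ L ((Γ₁ + Γ₂) y) = (Γ₁ - Γ₂) y := by
  rw [eq_neg_adjoint_iff_of_le_neg_adjoint hT hTH hHT]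
  refine Iff.trans ?_ (isLagrangian_iff_exists_linearIsometryEquiv
    (LinearMap.surjective_add_sub hΓ) (D := H.domain.comap T.adjoint.domain.subtype))
  exact forall_congr' fun y => iff_congr Iff.rfl <| forall₂_congr fun x _ => by
    rw [hGreen, inner_add_inner_eq_zero_iff]
    rfl

end LinearPMap

open LinearPMap in
theorem stmt_12_general {ℋ 𝒢 : Type*}
    [NormedAddCommGroup ℋ] [InnerProductSpace ℂ ℋ] [CompleteSpace ℋ]
    [NormedAddCommGroup 𝒢] [InnerProductSpace ℂ 𝒢] [CompleteSpace 𝒢]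
    (H₀ : ℋ →ₗ.[ℂ] ℋ)
    (hdense : Dense (H₀.domain : Set ℋ))
    -- `(𝒢, Γ₁, Γ₂)` is a boundary triplet for `H₀`:
    (Γ₁ Γ₂ : H₀.adjoint.domain →ₗ[ℂ] 𝒢)
    (hΓsurj : Function.Surjective fun x : H₀.adjoint.domain => (Γ₁ x, Γ₂ x))
    (hGreen : ∀ x y : H₀.adjoint.domain,
      ⟪H₀.adjoint x, (y : ℋ)⟫_ℂ + ⟪(x : ℋ), H₀.adjoint y⟫_ℂ
        = ⟪Γ₁ x, Γ₂ y⟫_ℂ + ⟪Γ₂ x, Γ₁ y⟫_ℂ)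
    -- an extension `H ⊇ H₀`:
    (H : ℋ →ₗ.[ℂ] ℋ) (hext : H₀ ≤ H) :
    H = -H.adjoint ↔
      ∃ L : 𝒢 ≃ₗᵢ[ℂ] 𝒢,
        (H.domain : Set ℋ) = {x : ℋ | ∃ hx : x ∈ H₀.adjoint.domain,
            (L (Γ₁ (⟨x, hx⟩ : H₀.adjoint.domain)) - Γ₁ (⟨x, hx⟩ : H₀.adjoint.domain)) +
              (L (Γ₂ (⟨x, hx⟩ : H₀.adjoint.domain)) + Γ₂ (⟨x, hx⟩ : H₀.adjoint.domain)) = 0} ∧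
          ∀ x : H.domain, ∃ hx : (x : ℋ) ∈ H₀.adjoint.domain,
            H x = -H₀.adjoint (⟨(x : ℋ), hx⟩ : H₀.adjoint.domain) := by
  have hdomain (L : 𝒢 ≃ₗᵢ[ℂ] 𝒢) (hHT : H ≤ -H₀.adjoint) :
      (∀ y : H₀.adjoint.domain, (y : ℋ) ∈ H.domain ↔ L ((Γ₁ + Γ₂) y) = (Γ₁ - Γ₂) y) ↔
        (H.domain : Set ℋ) = {x : ℋ | ∃ hx : x ∈ H₀.adjoint.domain,
          (L (Γ₁ ⟨x, hx⟩) - Γ₁ ⟨x, hx⟩) + (L (Γ₂ ⟨x, hx⟩) + Γ₂ ⟨x, hx⟩) = 0} := by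
    rw [Set.eq_setOf_exists_iff (t := H₀.adjoint.domain)
      (p := fun y => (L (Γ₁ y) - Γ₁ y) + (L (Γ₂ y) + Γ₂ y) = 0) hHT.1]
    simp only [sub_add_add_eq_zero_iff_map_add_eq_sub, LinearMap.add_apply, LinearMap.sub_apply,
      SetLike.mem_coe]
  constructor
  · intro hH
    have hHT : H ≤ -H₀.adjoint := hH.le.trans (neg_le_neg (adjoint_le_adjoint hdense hext))
    obtain ⟨L, hL⟩ :=
      (eq_neg_adjoint_iff_exists_linearIsometryEquiv hdense hΓsurj hGreen hext hHT).mp hH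
    exact ⟨L, (hdomain L hHT).mp hL, le_neg_iff.mp hHT⟩
  · rintro ⟨L, hdom, hact⟩
    have hHT : H ≤ -H₀.adjoint := le_neg_iff.mpr hact
    exact (eq_neg_adjoint_iff_exists_linearIsometryEquiv hdense hΓsurj hGreen hext hHT).mpr
      ⟨L, (hdomain L hHT).mpr hdom⟩

/-- **Theorem B.** Let `(𝒢, Γ₁, Γ₂)` be a boundary triplet for the
skew-symmetric operator `H₀`. An operator `H ⊇ H₀` is skew-self-adjoint iff there is a
unitary `L : 𝒢 → 𝒢` with `D(H) = {x ∈ D(H₀*) : (L − 1)Γ₁x + (L + 1)Γ₂x = 0}` and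
`Hx = −H₀*x` on `D(H)`. -/
theorem stmt_12 {ℋ 𝒢 : Type*}
    [NormedAddCommGroup ℋ] [InnerProductSpace ℂ ℋ] [CompleteSpace ℋ]
    [NormedAddCommGroup 𝒢] [InnerProductSpace ℂ 𝒢] [CompleteSpace 𝒢]
    (H₀ : ℋ →ₗ.[ℂ] ℋ)
    (hdense : Dense (H₀.domain : Set ℋ)) (hclosed : H₀.IsClosed)
    (hskew : H₀ ≤ -H₀.adjoint)
    -- `(𝒢, Γ₁, Γ₂)` is a boundary triplet for `H₀`:
    (Γ₁ Γ₂ : H₀.adjoint.domain →ₗ[ℂ] 𝒢)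
    (hΓsurj : Function.Surjective fun x : H₀.adjoint.domain => (Γ₁ x, Γ₂ x))
    (hGreen : ∀ x y : H₀.adjoint.domain,
      ⟪H₀.adjoint x, (y : ℋ)⟫_ℂ + ⟪(x : ℋ), H₀.adjoint y⟫_ℂ
        = ⟪Γ₁ x, Γ₂ y⟫_ℂ + ⟪Γ₂ x, Γ₁ y⟫_ℂ)
    -- an extension `H ⊇ H₀`:
    (H : ℋ →ₗ.[ℂ] ℋ) (hext : H₀ ≤ H) :
    H = -H.adjoint ↔
      ∃ L : 𝒢 ≃ₗᵢ[ℂ] 𝒢,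
        (H.domain : Set ℋ) = {x : ℋ | ∃ hx : x ∈ H₀.adjoint.domain,
            (L (Γ₁ (⟨x, hx⟩ : H₀.adjoint.domain)) - Γ₁ (⟨x, hx⟩ : H₀.adjoint.domain)) +
              (L (Γ₂ (⟨x, hx⟩ : H₀.adjoint.domain)) + Γ₂ (⟨x, hx⟩ : H₀.adjoint.domain)) = 0} ∧
          ∀ x : H.domain, ∃ hx : (x : ℋ) ∈ H₀.adjoint.domain,
            H x = -H₀.adjoint (⟨(x : ℋ), hx⟩ : H₀.adjoint.domain) :=
  stmt_12_general H₀ hdense Γ₁ Γ₂ hΓsurj hGreen H hext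
end
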